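/- arXiv:2605.21424 — 8 statements merged into one kernel-verified Lean document; each statement's English description precedes it below -/
import Mathlib

section
/- Let n₁ > 0 be real and 0 ≤ K ≤ N be real numbers. Then the function from ℕ≥1 to ℝ given by n_m ↦ I_{(n₁+N)/(n₁+N+n_m)}(n₁+K, n_m) is strictly increasing, where I_x(a,b) denotes the regularized incomplete beta function. -/
open Real MeasureTheory

/-- The regularized incomplete beta function `I_x(a,b)`. -/
noncomputable def regIncBeta (x a b : ℝ) : ℝ :=
    (Real.Gamma (a + b) / (Real.Gamma a * Real.Gamma b)) *
      ∫ t in (0 : ℝ)..x, t ^ (a - 1) * (1 - t) ^ (b - 1)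

section Aux


lemma int_aux {a : ℝ} (p : ℝ) (ha : 0 < a) {u v : ℝ} (h : ∀ t ∈ Set.uIcc u v, (1:ℝ) - t ≠ 0) :
    IntervalIntegrable (fun t => t ^ (a-1) * (1-t) ^ p) volume u v := by
  have h1 : IntervalIntegrable (fun t : ℝ => t ^ (a-1)) volume u v :=
    intervalIntegral.intervalIntegrable_rpow' (by linarith)
  exact h1.mul_continuousOn ((continuousOn_const.sub continuousOn_id).rpow_const
    (fun t ht => Or.inl (h t ht)))

lemma ftcA {a p x : ℝ} (ha : 0 < a) (hx0 : 0 < x) (hx1 : x < 1) :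
    ∫ t in (0:ℝ)..x, t ^ (a-1) * (1-t) ^ (p-1) * (a*(1-t) - p*t)
      = x ^ a * (1-x) ^ p := by
  have hne : ∀ t ∈ Set.uIcc (0:ℝ) x, (1:ℝ) - t ≠ 0 := by
    intro t ht
    rw [Set.uIcc_of_le hx0.le] at ht
    have := ht.2
    nlinarith [ht.1]
  have hInt : IntervalIntegrable
      (fun t => t ^ (a-1) * (1-t) ^ (p-1) * (a*(1-t) - p*t)) volume 0 x :=
    (int_aux (p-1) ha hne).mul_continuousOn (by fun_prop)
  have hcont : ContinuousOn (fun t : ℝ => t ^ a * (1-t) ^ p) (Set.Icc 0 x) := by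
    apply ContinuousOn.mul
    · exact continuousOn_id.rpow_const (fun t ht => Or.inr ha.le)
    · refine (continuousOn_const.sub continuousOn_id).rpow_const (fun t ht => Or.inl ?_)
      have := ht.2; have : t < 1 := lt_of_le_of_lt ht.2 hx1
      intro hcontra; simp only [Pi.sub_apply, id] at hcontra; linarith
  have hderiv : ∀ t ∈ Set.Ioo (0:ℝ) x, HasDerivWithinAt (fun t : ℝ => t ^ a * (1-t) ^ p)
      (t ^ (a-1) * (1-t) ^ (p-1) * (a*(1-t) - p*t)) (Set.Ioi t) t := by
    intro t ht
    have ht0 : t ≠ 0 := ne_of_gt ht.1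
    have ht1 : (1:ℝ) - t ≠ 0 := by have : t < 1 := lt_trans ht.2 hx1; intro hc; linarith
    have h1 : HasDerivAt (fun t : ℝ => t ^ a) (a * t ^ (a-1)) t := by
      simpa using hasDerivAt_rpow_const (p := a) (Or.inl ht0)
    have h2 : HasDerivAt (fun t : ℝ => (1-t) ^ p) ((-1) * p * (1-t) ^ (p-1)) t :=
      HasDerivAt.rpow_const ((hasDerivAt_id t).const_sub 1) (Or.inl ht1)
    have hd := h1.mul h2
    have e1 : t ^ a = t ^ (a-1) * t := by
      rw [Real.rpow_sub_one ht0]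
      field_simp
    have e2 : (1-t) ^ p = (1-t) ^ (p-1) * (1-t) := by
      rw [Real.rpow_sub_one ht1]
      field_simp
    have hval : a * t ^ (a-1) * ((1-t) ^ p) + (t ^ a) * ((-1) * p * (1-t) ^ (p-1))
        = t ^ (a-1) * (1-t) ^ (p-1) * (a*(1-t) - p*t) := by
      rw [e1, e2]; ring
    rw [← hval]
    exact hd.hasDerivWithinAt
  have := intervalIntegral.integral_eq_sub_of_hasDeriv_right_of_le hx0.le hcont hderiv hInt
  rw [this]
  rw [Real.zero_rpow (ne_of_gt ha)]
  norm_num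


lemma ftcB {a p w x : ℝ} (ha : 0 < a) (hw : 0 < w) (hwx : w < x) (hx1 : x < 1) :
    ∫ t in w..x, t ^ (a-1) * (1-t) ^ (p-1) * ((a*(1-t) - p*t) * (t - x) + t*(1-t))
      = w ^ a * (1-w) ^ p * (x - w) := by
  have hne : ∀ t ∈ Set.uIcc w x, (1:ℝ) - t ≠ 0 := by
    intro t ht
    rw [Set.uIcc_of_le hwx.le] at ht
    have : t < 1 := lt_of_le_of_lt ht.2 hx1
    intro hc; linarith
  have hInt : IntervalIntegrable
      (fun t => t ^ (a-1) * (1-t) ^ (p-1) * ((a*(1-t) - p*t) * (t - x) + t*(1-t)))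
      volume w x := by
    have h1 : IntervalIntegrable (fun t : ℝ => t ^ (a-1)) volume w x :=
      intervalIntegral.intervalIntegrable_rpow' (by linarith)
    have h2 : IntervalIntegrable (fun t : ℝ => t ^ (a-1) * (1-t) ^ (p-1)) volume w x :=
      h1.mul_continuousOn ((continuousOn_const.sub continuousOn_id).rpow_const
        (fun t ht => Or.inl (hne t ht)))
    exact h2.mul_continuousOn (by fun_prop)
  have hcont : ContinuousOn (fun t : ℝ => t ^ a * (1-t) ^ p * (t - x)) (Set.Icc w x) := by
    apply ContinuousOn.mul
    apply ContinuousOn.mul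
    · exact continuousOn_id.rpow_const (fun t ht => Or.inr ha.le)
    · refine (continuousOn_const.sub continuousOn_id).rpow_const (fun t ht => Or.inl ?_)
      have : t < 1 := lt_of_le_of_lt ht.2 hx1
      intro hc; simp only [Pi.sub_apply, id] at hc; linarith
    · fun_prop
  have hderiv : ∀ t ∈ Set.Ioo w x, HasDerivWithinAt (fun t : ℝ => t ^ a * (1-t) ^ p * (t - x))
      (t ^ (a-1) * (1-t) ^ (p-1) * ((a*(1-t) - p*t) * (t - x) + t*(1-t))) (Set.Ioi t) t := by
    intro t ht
    have ht0 : t ≠ 0 := ne_of_gt (lt_trans hw ht.1)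
    have ht1 : (1:ℝ) - t ≠ 0 := by have : t < 1 := lt_trans ht.2 hx1; intro hc; linarith
    have h1 : HasDerivAt (fun t : ℝ => t ^ a) (a * t ^ (a-1)) t := by
      simpa using hasDerivAt_rpow_const (p := a) (Or.inl ht0)
    have h2 : HasDerivAt (fun t : ℝ => (1-t) ^ p) ((-1) * p * (1-t) ^ (p-1)) t :=
      HasDerivAt.rpow_const ((hasDerivAt_id t).const_sub 1) (Or.inl ht1)
    have h3 : HasDerivAt (fun t : ℝ => t - x) 1 t := (hasDerivAt_id t).sub_const x
    have hd := (h1.mul h2).mul h3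
    have e1 : t ^ a = t ^ (a-1) * t := by rw [Real.rpow_sub_one ht0]; field_simp
    have e2 : (1-t) ^ p = (1-t) ^ (p-1) * (1-t) := by rw [Real.rpow_sub_one ht1]; field_simp
    have hval : (a * t ^ (a-1) * ((1-t) ^ p) + (t ^ a) * ((-1) * p * (1-t) ^ (p-1))) * (t - x)
          + (t ^ a * (1-t) ^ p) * 1
        = t ^ (a-1) * (1-t) ^ (p-1) * ((a*(1-t) - p*t) * (t - x) + t*(1-t)) := by
      rw [e1, e2]; ring
    rw [← hval]
    exact hd.hasDerivWithinAt
  have := intervalIntegral.integral_eq_sub_of_hasDeriv_right_of_le hwx.le hcont hderiv hInt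
  rw [this]
  ring



lemma key_step {a c M : ℝ} (ha : 0 < a) (hac : a ≤ c) (hM : 1 ≤ M) :
    M * ∫ t in (0:ℝ)..(c/(c+M)), t ^ (a-1) * (1-t) ^ (M-1)
      < (a+M) * ∫ t in (0:ℝ)..(c/(c+(M+1))), t ^ (a-1) * (1-t) ^ ((M+1)-1) := by
  have hc : 0 < c := lt_of_lt_of_le ha hac
  have hs : 0 < c + M := by linarith
  have hu : 0 < c + (M+1) := by linarith
  set x₁ : ℝ := c/(c+M) with hx₁def
  set x₂ : ℝ := c/(c+(M+1)) with hx₂def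
  have hx₂ : 0 < x₂ := div_pos hc hu
  have hx₂₁ : x₂ < x₁ := div_lt_div_of_pos_left hc hs (by linarith)
  have hx₁1 : x₁ < 1 := (div_lt_one hs).2 (by linarith)
  have hx₂1 : x₂ < 1 := lt_trans hx₂₁ hx₁1
  have hx₁0 : 0 < x₁ := lt_trans hx₂ hx₂₁
  -- simplify exponent
  rw [show (M+1)-1 = M by ring]
  -- basic ne facts
  have hne01 : ∀ t ∈ Set.uIcc (0:ℝ) x₁, (1:ℝ) - t ≠ 0 := by
    intro t ht; rw [Set.uIcc_of_le hx₁0.le] at ht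
    have : t < 1 := lt_of_le_of_lt ht.2 hx₁1; intro hcon; linarith
  have hne02 : ∀ t ∈ Set.uIcc (0:ℝ) x₂, (1:ℝ) - t ≠ 0 := by
    intro t ht; rw [Set.uIcc_of_le hx₂.le] at ht
    have : t < 1 := lt_of_le_of_lt ht.2 hx₂1; intro hcon; linarith
  have hne21 : ∀ t ∈ Set.uIcc x₂ x₁, (1:ℝ) - t ≠ 0 := by
    intro t ht; rw [Set.uIcc_of_le hx₂₁.le] at ht
    have : t < 1 := lt_of_le_of_lt ht.2 hx₁1; intro hcon; linarith
  -- integrability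
  have hi01 : IntervalIntegrable (fun t => t ^ (a-1) * (1-t) ^ (M-1)) volume 0 x₁ :=
    int_aux (M-1) ha hne01
  have hi02 : IntervalIntegrable (fun t => t ^ (a-1) * (1-t) ^ (M-1)) volume 0 x₂ :=
    int_aux (M-1) ha hne02
  have hi21 : IntervalIntegrable (fun t => t ^ (a-1) * (1-t) ^ (M-1)) volume x₂ x₁ :=
    int_aux (M-1) ha hne21
  have hi02M : IntervalIntegrable (fun t => t ^ (a-1) * (1-t) ^ M) volume 0 x₂ := by
    have := int_aux (p := M) ha hne02; exact this
  -- Step 1 : the identity on [0, x₂]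
  have hA : (a+M) * (∫ t in (0:ℝ)..x₂, t ^ (a-1) * (1-t) ^ M)
      = M * (∫ t in (0:ℝ)..x₂, t ^ (a-1) * (1-t) ^ (M-1)) + x₂ ^ a * (1-x₂) ^ M := by
    have hftc := ftcA (a := a) (p := M) ha hx₂ hx₂1
    have hcongr : ∫ t in (0:ℝ)..x₂, t ^ (a-1) * (1-t) ^ (M-1) * (a*(1-t) - M*t)
        = ∫ t in (0:ℝ)..x₂, ((a+M) * (t ^ (a-1) * (1-t) ^ M) - M * (t ^ (a-1) * (1-t) ^ (M-1))) := by
      apply intervalIntegral.integral_congr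
      intro t ht
      have h1t := hne02 t ht
      have e2 : (1-t) ^ M = (1-t) ^ (M-1) * (1-t) := by
        rw [Real.rpow_sub_one h1t]; field_simp
      simp only [e2]; ring
    rw [hcongr] at hftc
    rw [intervalIntegral.integral_sub (hi02M.const_mul _) (hi02.const_mul _),
      intervalIntegral.integral_const_mul, intervalIntegral.integral_const_mul] at hftc
    linarith [hftc]
  -- Step 2 : split the [0,x₁] integral
  have hsplit : ∫ t in (0:ℝ)..x₁, t ^ (a-1) * (1-t) ^ (M-1)
      = (∫ t in (0:ℝ)..x₂, t ^ (a-1) * (1-t) ^ (M-1))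
        + ∫ t in x₂..x₁, t ^ (a-1) * (1-t) ^ (M-1) :=
    (intervalIntegral.integral_add_adjacent_intervals hi02 hi21).symm
  -- Step 3 : the core strict bound on [x₂,x₁]
  have hcore : M * (∫ t in x₂..x₁, t ^ (a-1) * (1-t) ^ (M-1)) < x₂ ^ a * (1-x₂) ^ M := by
    have hΔ : 0 < x₁ - x₂ := by linarith
    set b₀ : ℝ := x₂ ^ a * (1-x₁) ^ M / (x₁ * (1-x₂)) with hb₀def
    have hb₀ : 0 < b₀ :=
      div_pos (mul_pos (Real.rpow_pos_of_pos hx₂ a) (Real.rpow_pos_of_pos (by linarith) M))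
        (mul_pos hx₁0 (by linarith))
    have hptwise : ∀ t ∈ Set.Icc x₂ x₁,
        M*(x₁-x₂) * (t ^ (a-1) * (1-t) ^ (M-1)) + b₀ * (M/(c+M)) * (t - x₂)
        ≤ t ^ (a-1) * (1-t) ^ (M-1) * ((a*(1-t) - M*t) * (t - x₁) + t*(1-t)) := by
      intro t ht
      have ht0 : 0 < t := lt_of_lt_of_le hx₂ ht.1
      have ht1 : t < 1 := lt_of_le_of_lt ht.2 hx₁1
      have hg2pos : (0:ℝ) < t ^ (a-1) * (1-t) ^ (M-1) :=
        mul_pos (Real.rpow_pos_of_pos ht0 _) (Real.rpow_pos_of_pos (by linarith) _)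
      have hg2lb : b₀ ≤ t ^ (a-1) * (1-t) ^ (M-1) := by
        have e1 : t ^ (a-1) = t ^ a / t := Real.rpow_sub_one (ne_of_gt ht0) a
        have e2 : (1-t) ^ (M-1) = (1-t) ^ M / (1-t) := Real.rpow_sub_one (by intro hd; linarith) M
        rw [e1, e2, div_mul_div_comm, hb₀def]
        apply div_le_div₀ (mul_nonneg (Real.rpow_pos_of_pos ht0 a).le
            (Real.rpow_pos_of_pos (by linarith) M).le) ?_ (mul_pos ht0 (by linarith)) ?_
        · exact mul_le_mul (Real.rpow_le_rpow hx₂.le ht.1 ha.le)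
            (Real.rpow_le_rpow (by linarith) (by linarith [ht.2]) (by linarith))
            (Real.rpow_pos_of_pos (by linarith) M).le (Real.rpow_pos_of_pos ht0 a).le
        · exact mul_le_mul ht.2 (by linarith [ht.1]) (by linarith) (by linarith)
      have hpoly : (M/(c+M)) * (t - x₂) ≤ (a*(1-t) - M*t) * (t - x₁) + t*(1-t) - M*(x₁-x₂) := by
        have hid : (a*(1-t) - M*t) * (t - x₁) + t*(1-t) - M*(x₁-x₂)
            = ((M+1)*(c-a)/(c+(M+1)))*(x₁-t) + (M/(c+M))*(t-x₂) + (M+a+1)*((t-x₂)*(x₁-t)) := by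
          rw [hx₁def, hx₂def]; field_simp; ring
        have h1 : 0 ≤ ((M+1)*(c-a)/(c+(M+1)))*(x₁-t) :=
          mul_nonneg (div_nonneg (mul_nonneg (by linarith) (by linarith)) hu.le)
            (by linarith [ht.2])
        have h2 : 0 ≤ (M+a+1)*((t-x₂)*(x₁-t)) :=
          mul_nonneg (by linarith) (mul_nonneg (by linarith [ht.1]) (by linarith [ht.2]))
        rw [hid]; linarith
      have h0 : 0 ≤ (M/(c+M)) * (t - x₂) :=
        mul_nonneg (div_nonneg (by linarith) hs.le) (by linarith [ht.1])
      nlinarith [mul_le_mul_of_nonneg_left hpoly hg2pos.le,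
        mul_le_mul_of_nonneg_right hg2lb h0]
    have hRHSint : IntervalIntegrable
        (fun t => t ^ (a-1) * (1-t) ^ (M-1) * ((a*(1-t) - M*t) * (t - x₁) + t*(1-t)))
        volume x₂ x₁ := hi21.mul_continuousOn (by fun_prop)
    have hlinint : IntervalIntegrable (fun t : ℝ => t - x₂) volume x₂ x₁ :=
      intervalIntegral.intervalIntegrable_id.sub (intervalIntegrable_const (c := x₂))
    have hLHSint : IntervalIntegrable
        (fun t => M*(x₁-x₂) * (t ^ (a-1) * (1-t) ^ (M-1)) + b₀ * (M/(c+M)) * (t - x₂))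
        volume x₂ x₁ := (hi21.const_mul _).add (hlinint.const_mul _)
    have hmono := intervalIntegral.integral_mono_on hx₂₁.le hLHSint hRHSint hptwise
    rw [ftcB ha hx₂ hx₂₁ hx₁1] at hmono
    rw [intervalIntegral.integral_add (hi21.const_mul _) (hlinint.const_mul _),
      intervalIntegral.integral_const_mul, intervalIntegral.integral_const_mul] at hmono
    have hlin : ∫ t in x₂..x₁, (t - x₂) = (x₁-x₂)^2/2 := by
      rw [intervalIntegral.integral_sub intervalIntegral.intervalIntegrable_id (intervalIntegrable_const (c := x₂))]
      simp [integral_id, intervalIntegral.integral_const]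
      ring
    rw [hlin] at hmono
    have hslack : 0 < b₀ * (M/(c+M)) * ((x₁-x₂)^2/2) := by positivity
    nlinarith [hmono, hslack, hΔ]
  rw [hsplit, mul_add]
  linarith [hcore, hA]


lemma consecutive {a c M : ℝ} (ha : 0 < a) (hac : a ≤ c) (hM : 1 ≤ M) :
    regIncBeta (c/(c+M)) a M < regIncBeta (c/(c+(M+1))) a (M+1) := by
  have hM0 : M ≠ 0 := by linarith
  have haM : a + M ≠ 0 := by linarith
  unfold regIncBeta
  have h1 : Real.Gamma (a+(M+1)) = (a+M) * Real.Gamma (a+M) := by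
    rw [show a+(M+1) = (a+M)+1 by ring, Real.Gamma_add_one haM]
  have h2 : Real.Gamma (M+1) = M * Real.Gamma M := Real.Gamma_add_one hM0
  rw [h1, h2]
  have hGa : 0 < Real.Gamma a := Real.Gamma_pos_of_pos ha
  have hGM : 0 < Real.Gamma M := Real.Gamma_pos_of_pos (by linarith)
  have hGaM : 0 < Real.Gamma (a+M) := Real.Gamma_pos_of_pos (by linarith)
  set J₁ := ∫ t in (0:ℝ)..(c/(c+M)), t ^ (a-1) * (1-t) ^ (M-1) with hJ₁
  set J₂ := ∫ t in (0:ℝ)..(c/(c+(M+1))), t ^ (a-1) * (1-t) ^ ((M+1)-1) with hJ₂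
  have hC : 0 < Real.Gamma (a+M) / (Real.Gamma a * Real.Gamma M * M) := by positivity
  have e1 : Real.Gamma (a+M) / (Real.Gamma a * Real.Gamma M) * J₁
      = (Real.Gamma (a+M) / (Real.Gamma a * Real.Gamma M * M)) * (M * J₁) := by
    field_simp
  have e2 : (a+M) * Real.Gamma (a+M) / (Real.Gamma a * (M * Real.Gamma M)) * J₂
      = (Real.Gamma (a+M) / (Real.Gamma a * Real.Gamma M * M)) * ((a+M) * J₂) := by
    field_simp
  rw [e1, e2]
  exact (mul_lt_mul_iff_right₀ hC).2 (key_step ha hac hM)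

end Aux

/-- For real `n₁ > 0` and reals `0 ≤ K ≤ N`, the function
`n_m ↦ I_{(n₁+N)/(n₁+N+n_m)}(n₁+K, n_m)` is strictly increasing on `ℕ≥1`. -/
theorem regIncBeta_strictMono (n₁ K N : ℝ) (hn₁ : 0 < n₁) (hK : 0 ≤ K) (hKN : K ≤ N) :
    ∀ nm nm' : ℕ, 1 ≤ nm → nm < nm' →
      regIncBeta ((n₁ + N) / (n₁ + N + nm)) (n₁ + K) nm <
        regIncBeta ((n₁ + N) / (n₁ + N + nm')) (n₁ + K) nm' := by
  have ha : 0 < n₁ + K := by linarith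
  have hac : n₁ + K ≤ n₁ + N := by linarith
  have step : ∀ m : ℕ, 1 ≤ m →
      regIncBeta ((n₁ + N) / (n₁ + N + m)) (n₁ + K) m <
        regIncBeta ((n₁ + N) / (n₁ + N + (m+1 : ℕ))) (n₁ + K) (m+1 : ℕ) := by
    intro m hm
    have hM : (1:ℝ) ≤ (m:ℝ) := by exact_mod_cast hm
    have := consecutive (M := (m:ℝ)) ha hac hM
    push_cast
    convert this using 3
  intro nm nm' h1 hlt
  induction nm' with
  | zero => omega
  | succ n ih =>
    rcases (by omega : nm = n ∨ nm < n) with rfl | h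
    · exact step nm h1
    · exact lt_trans (ih h) (step n (by omega))
end

section
/- For positive real numbers n₁, N, K with 0 ≤ K ≤ N, and any natural number n_m ≥ 1 and any h ∈ [0,1], the inequality (1 + h/(n₁+N+n_m))^{n₁+K+n_m} · (n₁+N+n_m+h)/(n₁+K+n_m) ≥ (1 + h/n_m)^{n_m} holds. -/
/-- For `n₁ > 0`, `0 ≤ K ≤ N` real, `n_m ≥ 1` natural and `h ∈ [0,1]`:
`(1 + h/(n₁+N+n_m))^(n₁+K+n_m) · (n₁+N+n_m+h)/(n₁+K+n_m) ≥ (1 + h/n_m)^(n_m)`. -/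
theorem key_rpow_inequality (n₁ K N : ℝ) (hn₁ : 0 < n₁) (hK : 0 ≤ K) (hKN : K ≤ N)
    (nm : ℕ) (hnm : 1 ≤ nm) (h : ℝ) (h0 : 0 ≤ h) (h1 : h ≤ 1) :
    (1 + h / (n₁ + N + nm)) ^ (n₁ + K + nm) * ((n₁ + N + nm + h) / (n₁ + K + nm)) ≥
      (1 + h / nm) ^ (nm : ℝ) := by
  have hnm0 : (0:ℝ) < (nm:ℝ) := by exact_mod_cast hnm
  set A : ℝ := n₁ + N + nm with hAdef
  set B : ℝ := n₁ + K + nm with hBdef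
  have hA : 0 < A := by simp only [hAdef]; linarith
  have hB : 0 < B := by positivity
  have hBA : B ≤ A := by simp only [hAdef, hBdef]; linarith
  have hAh : 0 < A + h := by linarith
  -- Step 1 : (1 + h/nm)^nm ≤ exp h
  have step1 : (1 + h / nm) ^ (nm : ℝ) ≤ Real.exp h := by
    have hb : 1 + h / nm ≤ Real.exp (h / nm) := by
      have := Real.add_one_le_exp (h / nm)
      linarith
    calc (1 + h / nm) ^ (nm : ℝ) ≤ (Real.exp (h / nm)) ^ (nm : ℝ) := by
          apply Real.rpow_le_rpow (by positivity) hb (by positivity)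
      _ = Real.exp (h / nm * nm) := (Real.exp_mul _ _).symm
      _ = Real.exp h := by rw [div_mul_cancel₀ _ (ne_of_gt hnm0)]
  -- Step 2 : exp (h/(A+h)) ≤ 1 + h/A
  have step2 : Real.exp (h / (A + h)) ≤ 1 + h / A := by
    have e1 : A / (A + h) ≤ Real.exp (-(h / (A + h))) := by
      have := Real.add_one_le_exp (-(h / (A + h)))
      have : 1 - h / (A + h) ≤ Real.exp (-(h / (A + h))) := by linarith
      have heq : A / (A + h) = 1 - h / (A + h) := by field_simp; ring
      linarith [heq ▸ this]
    have e2 : Real.exp (h / (A + h)) * (A / (A + h)) ≤ 1 := by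
      calc Real.exp (h / (A + h)) * (A / (A + h))
          ≤ Real.exp (h / (A + h)) * Real.exp (-(h / (A + h))) := by
            apply mul_le_mul_of_nonneg_left e1 (Real.exp_nonneg _)
        _ = 1 := by rw [← Real.exp_add]; simp
    have hAA : (0:ℝ) < A / (A + h) := by positivity
    have : Real.exp (h / (A + h)) ≤ (A + h) / A := by
      rw [le_div_iff₀ hA]
      calc Real.exp (h / (A + h)) * A
          = (Real.exp (h / (A + h)) * (A / (A + h))) * (A + h) := by field_simp
        _ ≤ 1 * (A + h) := by
            apply mul_le_mul_of_nonneg_right e2 hAh.le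
        _ = A + h := by ring
    have heq : (A + h) / A = 1 + h / A := by field_simp
    linarith [heq ▸ this]
  -- Step 3 : exp (h*B/(A+h)) ≤ (1 + h/A)^B
  have step3 : Real.exp (h / (A + h) * B) ≤ (1 + h / A) ^ B := by
    calc Real.exp (h / (A + h) * B) = (Real.exp (h / (A + h))) ^ B := Real.exp_mul _ _
      _ ≤ (1 + h / A) ^ B := Real.rpow_le_rpow (Real.exp_nonneg _) step2 hB.le
  -- Step 4 : exp h ≤ exp (h*B/(A+h)) * ((A+h)/B)
  have step4 : Real.exp h ≤ Real.exp (h / (A + h) * B) * ((A + h) / B) := by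
    set u : ℝ := B / (A + h) with hudef
    have hu0 : 0 < u := by positivity
    have hu1 : u ≤ 1 := by
      rw [hudef, div_le_one hAh]; linarith
    have key : u ≤ Real.exp (h * u - h) := by
      have h1' : u - 1 ≤ h * u - h := by nlinarith
      have h2' : u ≤ Real.exp (u - 1) := by
        have := Real.add_one_le_exp (u - 1); linarith
      exact h2'.trans (Real.exp_le_exp.mpr h1')
    have : u * Real.exp h ≤ Real.exp (h * u) := by
      calc u * Real.exp h ≤ Real.exp (h * u - h) * Real.exp h := by
            apply mul_le_mul_of_nonneg_right key (Real.exp_nonneg _)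
        _ = Real.exp (h * u) := by rw [← Real.exp_add]; ring_nf
    have harg : h / (A + h) * B = h * u := by rw [hudef]; ring
    rw [harg]
    calc Real.exp h = (u * Real.exp h) * ((A + h) / B) := by
          rw [hudef]; field_simp
      _ ≤ Real.exp (h * u) * ((A + h) / B) := by
          apply mul_le_mul_of_nonneg_right this (by positivity)
  -- Combine
  have step5 : Real.exp (h / (A + h) * B) * ((A + h) / B) ≤
      (1 + h / A) ^ B * ((A + h) / B) := by
    apply mul_le_mul_of_nonneg_right step3 (by positivity)
  calc (1 + h / nm) ^ (nm : ℝ) ≤ Real.exp h := step1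
    _ ≤ Real.exp (h / (A + h) * B) * ((A + h) / B) := step4
    _ ≤ (1 + h / A) ^ B * ((A + h) / B) := step5
end

section
/- Let n₁, n₂ be positive integers with n₁ < n₂, and let X be a binomially distributed random variable with n₁+n₂-1 trials and success probability n₂/(n₁+n₂). Then P(X ≤ n₂ - 1) > 1/2. -/
open Finset

section BinomialMedianWinning

noncomputable def S (n j : ℕ) : ℝ :=
  ∑ k ∈ Finset.range j,
    (Nat.choose (n-1) k : ℝ) * ((j : ℝ) / n) ^ k * (((n - j : ℕ) : ℝ) / n) ^ (n - 1 - k)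


-- P4
lemma exp_le_one_add_sq {w : ℝ} (h : |w| ≤ 1) : Real.exp w ≤ 1 + w + w ^ 2 := by
  have hb := Real.exp_bound h (n := 2) (by norm_num)
  have hs : ∑ m ∈ Finset.range 2, w ^ m / (Nat.factorial m) = 1 + w := by
    simp [Finset.sum_range_succ, Nat.factorial]
  rw [hs] at hb
  norm_num [Nat.factorial] at hb
  have h1 := (abs_sub_le_iff.1 hb).1
  nlinarith [sq_abs w, sq_nonneg w]

-- exp lower bound
lemma exp_lower {w : ℝ} (h : |w| ≤ 1) :
    1 + w + w ^ 2 / 2 - (2/9) * |w| ^ 3 ≤ Real.exp w := by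
  have hb := Real.exp_bound h (n := 3) (by norm_num)
  have hs : ∑ m ∈ Finset.range 3, w ^ m / (Nat.factorial m) = 1 + w + w ^ 2 / 2 := by
    norm_num [Finset.sum_range_succ, Nat.factorial]
  rw [hs] at hb
  norm_num [Nat.factorial] at hb
  have h1 := (abs_sub_le_iff.1 hb).2
  nlinarith [h1]

-- P1
lemma log_one_sub_le {y : ℝ} (h0 : 0 ≤ y) (h1 : y ≤ 1/3) :
    Real.log (1 - y) ≤ -y - y ^ 2 / 2 := by
  have hy1 : (0:ℝ) < 1 - y := by linarith
  rw [Real.log_le_iff_le_exp hy1]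
  have hwabs : |(-y - y^2/2 : ℝ)| ≤ 1 := by
    rw [abs_le]; constructor <;> nlinarith
  have h2 := exp_lower hwabs
  have habs : |(-y - y^2/2 : ℝ)| = y + y^2/2 := by
    rw [abs_of_nonpos (by nlinarith)]; ring
  rw [habs] at h2
  have h4 : y^4 ≤ y^3 * (1/3) := by nlinarith [pow_nonneg h0 3]
  have h5 : y^5 ≤ y^3 * (1/9) := by nlinarith [pow_nonneg h0 3, pow_nonneg h0 4]
  have h6 : y^6 ≤ y^3 * (1/27) := by nlinarith [pow_nonneg h0 3, pow_nonneg h0 4, pow_nonneg h0 5]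
  nlinarith [h2, pow_nonneg h0 3]


set_option maxHeartbeats 1000000 in
lemma pointwise {j m : ℕ} (hj : 2 ≤ j) (hm : 1 ≤ m) {x : ℝ}
    (hx1 : (j:ℝ) ≤ x) (hx2 : x ≤ (j:ℝ) + 1) :
    (j:ℝ) * x ^ (j-1) * (((j:ℝ) + (m:ℝ) + 1) - x) ^ m ≤
      ((j:ℝ)+1) ^ j * (m:ℝ) ^ m *
        (1 + ((2*((j:ℝ)+1-x)-1) * (1/((j:ℝ)+1)) - ((j:ℝ)/(2*((j:ℝ)+1)^2)) * ((j:ℝ)+1-x)^2)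
           + ((2*((j:ℝ)+1-x)-1) * (1/((j:ℝ)+1)) - ((j:ℝ)/(2*((j:ℝ)+1)^2)) * ((j:ℝ)+1-x)^2)^2) := by
  set jr : ℝ := (j : ℝ) with hjr
  set mr : ℝ := (m : ℝ) with hmr
  have hjr2 : (2:ℝ) ≤ jr := by rw [hjr]; exact_mod_cast hj
  have hmr1 : (1:ℝ) ≤ mr := by rw [hmr]; exact_mod_cast hm
  set s : ℝ := jr + 1 - x with hs
  set t : ℝ := 1/(jr+1) with ht
  set β : ℝ := jr/(2*(jr+1)^2) with hβ
  set E : ℝ := (2*s-1) * t - β * s^2 with hE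
  have hs0 : 0 ≤ s := by rw [hs]; linarith
  have hs1 : s ≤ 1 := by rw [hs]; linarith
  have hx0 : (0:ℝ) < x := by linarith
  have hjr1 : (0:ℝ) < jr + 1 := by linarith
  have hnx : mr ≤ jr + mr + 1 - x := by linarith
  have hnx0 : (0:ℝ) < jr + mr + 1 - x := by linarith
  have hmr0 : (0:ℝ) < mr := by linarith
  have hjr0 : (0:ℝ) < jr := by linarith
  have ht0 : 0 < t := by rw [ht]; positivity
  have ht3 : t ≤ 1/3 := by
    rw [ht, div_le_div_iff₀ hjr1 (by norm_num)]; linarith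
  have hβ0 : 0 < β := by rw [hβ]; positivity
  have hβ9 : β ≤ 1/9 := by
    rw [hβ, div_le_div_iff₀ (by positivity) (by norm_num)]; nlinarith
  -- (a)
  have hxval : x = (jr+1) * (1 - s/(jr+1)) := by field_simp; rw [hs]; ring
  have hsy0 : 0 ≤ s/(jr+1) := by positivity
  have hsy1 : s/(jr+1) ≤ 1/3 := by
    rw [div_le_div_iff₀ hjr1 (by norm_num)]; linarith
  have hsypos : (0:ℝ) < 1 - s/(jr+1) := by linarith
  have hlogx : Real.log x = Real.log (jr+1) + Real.log (1 - s/(jr+1)) := by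
    rw [hxval, Real.log_mul (by positivity) (by linarith)]
  have hloga : jr * Real.log x ≤ jr * Real.log (jr+1) - jr*s/(jr+1) - β * s^2 := by
    have h1 := log_one_sub_le hsy0 hsy1
    have h2 : jr * Real.log (1 - s/(jr+1)) ≤ jr * (-(s/(jr+1)) - (s/(jr+1))^2/2) := by
      exact mul_le_mul_of_nonneg_left h1 (le_of_lt hjr0)
    have h3 : jr * (-(s/(jr+1)) - (s/(jr+1))^2/2) = -(jr*s/(jr+1)) - β * s^2 := by
      rw [hβ]; field_simp
    rw [hlogx]
    nlinarith [h2, h3]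
  -- (b)
  have hlogb : mr * Real.log (jr + mr + 1 - x) ≤ mr * Real.log mr + s := by
    have h1 : Real.log (jr + mr + 1 - x) = Real.log mr + Real.log ((jr + mr + 1 - x)/mr) := by
      rw [← Real.log_mul (ne_of_gt hmr0) (by positivity)]
      congr 1; field_simp
    have h2 : Real.log ((jr + mr + 1 - x)/mr) ≤ (jr + mr + 1 - x)/mr - 1 :=
      Real.log_le_sub_one_of_pos (by positivity)
    have h3 : mr * ((jr + mr + 1 - x)/mr - 1) = s := by
      rw [hs]; field_simp; ring
    calc mr * Real.log (jr + mr + 1 - x)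
        = mr * Real.log mr + mr * Real.log ((jr + mr + 1 - x)/mr) := by rw [h1]; ring
      _ ≤ mr * Real.log mr + mr * ((jr + mr + 1 - x)/mr - 1) := by
          have := mul_le_mul_of_nonneg_left h2 (le_of_lt hmr0); linarith
      _ = mr * Real.log mr + s := by rw [h3]
  -- (c)
  have hlogc : Real.log jr - Real.log x ≤ -((1-s)/(jr+1)) := by
    have h1 : 1 - (x/jr)⁻¹ ≤ Real.log (x/jr) := Real.one_sub_inv_le_log_of_pos (by positivity)
    have h2 : Real.log (x/jr) = Real.log x - Real.log jr :=
      Real.log_div (ne_of_gt hx0) (ne_of_gt hjr0)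
    have h3 : (x/jr)⁻¹ = jr/x := by rw [inv_div]
    have h4 : 1 - jr/x = (x - jr)/x := by field_simp
    have h5 : (x - jr)/(jr+1) ≤ (x - jr)/x :=
      div_le_div_of_nonneg_left (by linarith) hx0 hx2
    have h6 : (1-s)/(jr+1) = (x - jr)/(jr+1) := by rw [hs]; ring_nf
    rw [h2, h3, h4] at h1
    linarith [h1, h5, h6 ▸ le_refl ((1-s)/(jr+1))]
  -- main log inequality
  have hcast : ((j-1 : ℕ) : ℝ) = jr - 1 := by
    rw [hjr]; push_cast [Nat.cast_sub (by omega : 1 ≤ j)]; ring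
  have hlogL : Real.log (jr * x ^ (j-1) * ((jr + mr + 1) - x) ^ m)
      = Real.log jr + (jr - 1) * Real.log x + mr * Real.log (jr + mr + 1 - x) := by
    rw [Real.log_mul (by positivity) (by positivity),
        Real.log_mul (ne_of_gt hjr0) (by positivity),
        Real.log_pow, Real.log_pow, hcast, hmr]
  have hlogT : Real.log ((jr+1) ^ j * mr ^ m)
      = jr * Real.log (jr+1) + mr * Real.log mr := by
    rw [Real.log_mul (by positivity) (by positivity), Real.log_pow, Real.log_pow, hjr, hmr]
  have hid : -(jr*s/(jr+1)) - β*s^2 - ((1-s)/(jr+1)) + s = E := by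
    rw [hE, ht]; field_simp; ring
  have hmain : Real.log (jr * x ^ (j-1) * ((jr + mr + 1) - x) ^ m)
      ≤ Real.log ((jr+1) ^ j * mr ^ m) + E := by
    rw [hlogL, hlogT]
    have expand : Real.log jr + (jr - 1) * Real.log x
        = jr * Real.log x + (Real.log jr - Real.log x) := by ring
    rw [expand]
    linarith [hloga, hlogb, hlogc, hid]
  -- exponentiate
  have hLpos : 0 < jr * x ^ (j-1) * ((jr + mr + 1) - x) ^ m := by positivity
  have hTpos : 0 < (jr+1) ^ j * mr ^ m := by positivity
  have hEabs : |E| ≤ 1 := by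
    rw [abs_le, hE]
    have h1 : 0 ≤ β * s^2 := mul_nonneg hβ0.le (sq_nonneg s)
    have h2 : β * s^2 ≤ 1/9 := by nlinarith [sq_nonneg s]
    constructor
    · nlinarith
    · nlinarith
  calc jr * x ^ (j-1) * ((jr + mr + 1) - x) ^ m
      = Real.exp (Real.log (jr * x ^ (j-1) * ((jr + mr + 1) - x) ^ m)) := (Real.exp_log hLpos).symm
    _ ≤ Real.exp (Real.log ((jr+1) ^ j * mr ^ m) + E) := Real.exp_le_exp.mpr hmain
    _ = ((jr+1) ^ j * mr ^ m) * Real.exp E := by rw [Real.exp_add, Real.exp_log hTpos]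
    _ ≤ ((jr+1) ^ j * mr ^ m) * (1 + E + E^2) :=
        mul_le_mul_of_nonneg_left (exp_le_one_add_sq hEabs) hTpos.le

lemma S_compl {n a b : ℕ} (ha : 1 ≤ a) (hb : 1 ≤ b) (hab : a + b = n) :
    S n a + S n b = 1 := by
  have hn : 0 < n := by omega
  have hnR : (0:ℝ) < n := by exact_mod_cast hn
  set N := n - 1 with hN
  have hNn : N + 1 = n := by omega
  set p : ℝ := (b : ℝ) / n with hp
  set q : ℝ := (a : ℝ) / n with hq
  have habR : (a : ℝ) + (b : ℝ) = n := by exact_mod_cast congrArg (Nat.cast (R := ℝ)) hab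
  have hpq : q + p = 1 := by
    rw [hp, hq, ← add_div, habR, div_self (ne_of_gt hnR)]
  have htot : ∑ k ∈ Finset.range (N+1), q ^ k * p ^ (N - k) * (Nat.choose N k : ℝ) = 1 := by
    rw [← add_pow, hpq, one_pow]
  have hSa : S n a = ∑ k ∈ Finset.range a, q ^ k * p ^ (N - k) * (Nat.choose N k : ℝ) := by
    unfold S
    apply Finset.sum_congr rfl
    intro k hk
    have hba : n - a = b := by omega
    rw [hba]
    ring
  have hSb : S n b = ∑ k ∈ Finset.Ico a (N+1), q ^ k * p ^ (N - k) * (Nat.choose N k : ℝ) := by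
    unfold S
    rw [Finset.sum_bij' (i := fun (k : ℕ) _ => N - k) (j := fun (k : ℕ) _ => N - k)]
    · intro k hk
      simp only [Finset.mem_range] at hk
      simp only [Finset.mem_Ico]
      omega
    · intro k hk
      simp only [Finset.mem_Ico] at hk
      simp only [Finset.mem_range]
      omega
    · intro k hk
      simp only [Finset.mem_range] at hk
      omega
    · intro k hk
      simp only [Finset.mem_Ico] at hk
      omega
    · intro k hk
      simp only [Finset.mem_range] at hk
      have h1 : n - b = a := by omega
      have h2 : N - (N - k) = k := by omega
      have h3 : N.choose (N - k) = N.choose k := Nat.choose_symm (by omega)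
      rw [h1, h2, h3]
      ring
  rw [hSa, hSb, ← htot, ← Finset.sum_range_add_sum_Ico _ (by omega : a ≤ N + 1)]


set_option maxHeartbeats 1600000 in
lemma S_step {n j : ℕ} (hj : 2 ≤ j) (hjn : j + 2 ≤ n) : S n j < S n (j+1) := by
  set N := n - 1 with hN
  set m := N - j with hm
  have hm1 : 1 ≤ m := by omega
  have hNjm : N = j + m := by omega
  have hnjm : n = j + m + 1 := by omega
  set jr : ℝ := (j : ℝ) with hjr
  set mr : ℝ := (m : ℝ) with hmr
  have hjr2 : (2:ℝ) ≤ jr := by rw [hjr]; exact_mod_cast hj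
  have hmr1 : (1:ℝ) ≤ mr := by rw [hmr]; exact_mod_cast hm1
  set nR : ℝ := (n : ℝ) with hnR
  have hnval : nR = jr + mr + 1 := by
    rw [hnR, hjr, hmr]; push_cast [hnjm]; ring
  have hnR0 : (0:ℝ) < nR := by rw [hnval]; linarith
  set t : ℝ := 1/(jr+1) with ht
  set β : ℝ := jr/(2*(jr+1)^2) with hβ
  set Cj : ℝ := (Nat.choose N j : ℝ) with hCj
  have hCj0 : (0:ℝ) < Cj := by
    rw [hCj]; exact_mod_cast Nat.choose_pos (by omega : j ≤ N)
  set p₀ : ℝ := jr / nR with hp₀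
  set p₁ : ℝ := (jr + 1) / nR with hp₁
  set F : ℝ → ℝ := fun p => ∑ k ∈ Finset.range j, (Nat.choose N k : ℝ) * (p^k * (1-p)^(N-k))
    with hF
  -- derivative of F
  have hFderiv : ∀ p : ℝ, HasDerivAt F (-(jr * Cj * p^(j-1) * (1-p)^(N-j))) p := by
    intro p
    have hterm : ∀ k ∈ Finset.range j, HasDerivAt
        (fun q : ℝ => (Nat.choose N k : ℝ) * (q^k * (1-q)^(N-k)))
        (((k:ℝ) * (Nat.choose N k : ℝ) * p^(k-1) * (1-p)^(N-k))
          - (((k:ℝ)+1) * (Nat.choose N (k+1) : ℝ) * p^k * (1-p)^(N-(k+1)))) p := by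
      intro k hk
      simp only [Finset.mem_range] at hk
      have h1 : HasDerivAt (fun q : ℝ => q^k) ((k:ℝ)*p^(k-1)) p := hasDerivAt_pow k p
      have hlin : HasDerivAt (fun q : ℝ => 1 - q) (-1) p := by
        simpa using (hasDerivAt_id p).const_sub 1
      have h2 : HasDerivAt (fun q : ℝ => (1-q)^(N-k))
          ((((N-k : ℕ):ℝ) * (1-p)^(N-k-1)) * (-1)) p :=
        (hasDerivAt_pow (N-k) (1-p)).comp p hlin
      have h3 := (h1.mul h2).const_mul (Nat.choose N k : ℝ)
      refine h3.congr_deriv (Eq.symm ?_)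
      have hch : (Nat.choose N (k+1) : ℝ) * ((k:ℝ)+1) = (Nat.choose N k : ℝ) * ((N-k : ℕ):ℝ) := by
        exact_mod_cast Nat.choose_succ_right_eq N k
      have hexp : N - (k+1) = N - k - 1 := by omega
      rw [hexp]
      linear_combination (-(p^k*(1-p)^(N-k-1))) * hch
    have hsum := HasDerivAt.fun_sum hterm
    refine hsum.congr_deriv (Eq.symm ?_)
    have htel : ∑ k ∈ Finset.range j,
        (((k:ℝ) * (Nat.choose N k : ℝ) * p^(k-1) * (1-p)^(N-k))
          - (((k:ℝ)+1) * (Nat.choose N (k+1) : ℝ) * p^k * (1-p)^(N-(k+1))))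
        = (fun k : ℕ => (k:ℝ) * (Nat.choose N k : ℝ) * p^(k-1) * (1-p)^(N-k)) 0
          - (fun k : ℕ => (k:ℝ) * (Nat.choose N k : ℝ) * p^(k-1) * (1-p)^(N-k)) j := by
      rw [← Finset.sum_range_sub' (f := fun k : ℕ =>
        (k:ℝ) * (Nat.choose N k : ℝ) * p^(k-1) * (1-p)^(N-k))]
      apply Finset.sum_congr rfl
      intro k hk
      simp only [Nat.add_sub_cancel]
      push_cast
      ring
    rw [htel]
    simp [hCj, hjr]
  -- t, β basic facts
  have hjr1 : (0:ℝ) < jr + 1 := by linarith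
  have ht0 : 0 < t := by rw [ht]; positivity
  have ht3 : t ≤ 1/3 := by
    rw [ht, div_le_div_iff₀ hjr1 (by norm_num)]; linarith
  have hβ0 : 0 < β := by rw [hβ]; positivity
  have htβ : t^2 ≤ β := by
    rw [ht, hβ, div_pow, div_le_div_iff₀ (by positivity) (by positivity)]
    nlinarith
  have hβt : β ≤ t/2 := by
    have h2 : t/2 = 1/(2*(jr+1)) := by rw [ht]; field_simp
    rw [hβ, h2, div_le_div_iff₀ (by positivity) (by positivity)]
    nlinarith
  -- the antiderivative polynomial
  set A : ℝ → ℝ := fun s => s + t*(2*s-1)^2/4 - β*s^3/3 + t^2*(2*s-1)^3/6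
      - t*β*(s^4 - 2/3*s^3) + β^2*s^5/5 with hA
  have hAderiv : ∀ s : ℝ, HasDerivAt A
      (1 + ((2*s-1)*t - β*s^2) + ((2*s-1)*t - β*s^2)^2) s := by
    intro s
    have h2s : HasDerivAt (fun s : ℝ => 2*s-1) 2 s := by
      simpa using ((hasDerivAt_id s).const_mul 2).sub_const 1
    have hq2 : HasDerivAt (fun s : ℝ => (2*s-1)^2) (2*(2*s-1)^1*2) s :=
      by have h := (hasDerivAt_pow 2 (2*s-1)).comp s h2s; exact h.congr_deriv (by norm_num)
    have hq3 : HasDerivAt (fun s : ℝ => (2*s-1)^3) (3*(2*s-1)^2*2) s :=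
      by have h := (hasDerivAt_pow 3 (2*s-1)).comp s h2s; exact h.congr_deriv (by norm_num)
    have hs3 : HasDerivAt (fun s : ℝ => s^3) (3*s^2) s := by
      simpa using hasDerivAt_pow 3 s
    have hs4 : HasDerivAt (fun s : ℝ => s^4) (4*s^3) s := by
      simpa using hasDerivAt_pow 4 s
    have hs5 : HasDerivAt (fun s : ℝ => s^5) (5*s^4) s := by
      simpa using hasDerivAt_pow 5 s
    have d1 := (hq2.const_mul t).div_const 4
    have d2 := (hs3.const_mul β).div_const 3
    have d3 := (hq3.const_mul (t^2)).div_const 6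
    have d4 := (hs4.sub (hs3.const_mul (2/3 : ℝ))).const_mul (t*β)
    have d5 := (hs5.const_mul (β^2)).div_const 5
    have hh := (((((hasDerivAt_id s).add d1).sub d2).add d3).sub d4).add d5
    refine hh.congr_deriv (Eq.symm ?_)
    ring
  -- Phi and its derivative
  set c : ℝ := Cj * (jr+1)^j * mr^m / nR^N with hc
  have hc0 : 0 < c := by rw [hc]; positivity
  set Φ : ℝ → ℝ := fun p => F p + (-(c * A (jr + 1 - nR * p))) with hΦ
  have hΦderiv : ∀ p : ℝ, HasDerivAt Φ
      ((-(jr * Cj * p^(j-1) * (1-p)^(N-j))) +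
        c * nR * (1 + ((2*(jr+1-nR*p)-1)*t - β*(jr+1-nR*p)^2)
          + ((2*(jr+1-nR*p)-1)*t - β*(jr+1-nR*p)^2)^2)) p := by
    intro p
    have hinner : HasDerivAt (fun p : ℝ => jr + 1 - nR * p) (-nR) p := by
      simpa using ((hasDerivAt_id p).const_mul nR).const_sub (jr+1)
    have hcomp := (hAderiv (jr + 1 - nR * p)).comp p hinner
    have hR := (hcomp.const_mul c).neg
    have := (hFderiv p).add hR
    refine this.congr_deriv (Eq.symm ?_)
    ring
  -- pointwise derivative nonneg on the interval
  have hkey : ∀ p ∈ Set.Icc p₀ p₁,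
      jr * Cj * p^(j-1) * (1-p)^(N-j) ≤
      c * nR * (1 + ((2*(jr+1-nR*p)-1)*t - β*(jr+1-nR*p)^2)
          + ((2*(jr+1-nR*p)-1)*t - β*(jr+1-nR*p)^2)^2) := by
    intro p hp
    obtain ⟨hpl, hpu⟩ := hp
    set x : ℝ := nR * p with hx
    have hx1 : jr ≤ x := by
      rw [hx]
      calc jr = nR * p₀ := by rw [hp₀]; field_simp
        _ ≤ nR * p := by exact mul_le_mul_of_nonneg_left hpl hnR0.le
    have hx2 : x ≤ jr + 1 := by
      rw [hx]
      calc nR * p ≤ nR * p₁ := mul_le_mul_of_nonneg_left hpu hnR0.le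
        _ = jr + 1 := by rw [hp₁]; field_simp
    have hpw := pointwise hj hm1 hx1 hx2
    rw [← hjr, ← hmr, ← ht, ← hβ] at hpw
    -- translate
    have hpx : p = x / nR := by rw [hx]; field_simp
    have h1px : 1 - p = (nR - x)/nR := by rw [hpx]; field_simp
    have hNm : N - j = m := hm.symm
    have hmm : (jr + mr + 1) - x = nR - x := by rw [hnval]
    have hexps : (j-1) + m = N - 1 := by omega
    have hN1 : N - 1 + 1 = N := by omega
    have hgj : jr * Cj * p^(j-1) * (1-p)^(N-j) =
        (Cj / nR^(N-1)) * (jr * x^(j-1) * ((jr + mr + 1) - x)^m) := by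
      rw [hNm, h1px, hpx, hmm, div_pow, div_pow, ← hexps, pow_add]
      field_simp
    have hcn : c * nR * (1 + ((2*(jr+1-x)-1)*t - β*(jr+1-x)^2)
          + ((2*(jr+1-x)-1)*t - β*(jr+1-x)^2)^2) =
        (Cj / nR^(N-1)) * ((jr+1)^j * mr^m * (1 + ((2*(jr+1-x)-1)*t - β*(jr+1-x)^2)
          + ((2*(jr+1-x)-1)*t - β*(jr+1-x)^2)^2)) := by
      have hpN : nR^N = nR^(N-1) * nR := by rw [← pow_succ, hN1]
      rw [hc, hpN, ← div_div, div_mul_cancel₀ _ hnR0.ne']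
      ring
    rw [hgj, hcn]
    apply mul_le_mul_of_nonneg_left hpw (by positivity)
  -- monotonicity of Φ on the interval
  have hp01 : p₀ ≤ p₁ := by
    rw [hp₀, hp₁, div_le_div_iff₀ hnR0 hnR0]
    nlinarith
  have hΦdiff : Differentiable ℝ Φ := fun p => (hΦderiv p).differentiableAt
  have hmono : MonotoneOn Φ (Set.Icc p₀ p₁) := by
    apply monotoneOn_of_deriv_nonneg (convex_Icc p₀ p₁) hΦdiff.continuous.continuousOn
      hΦdiff.differentiableOn
    intro p hp
    rw [interior_Icc] at hp
    rw [(hΦderiv p).deriv]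
    have := hkey p (Set.mem_Icc.mpr ⟨hp.1.le, hp.2.le⟩)
    linarith
  have hΦle : Φ p₀ ≤ Φ p₁ := hmono (Set.mem_Icc.mpr ⟨le_refl _, hp01⟩)
      (Set.mem_Icc.mpr ⟨hp01, le_refl _⟩) hp01
  -- compute A at endpoints
  have hA1 : A 1 = 1 + t/4 - β/3 + t^2/6 - t*β*(1/3) + β^2/5 := by
    rw [hA]; norm_num
  have hA0 : A 0 = t/4 - t^2/6 := by
    rw [hA]; norm_num; ring
  have hAlt : A 1 - A 0 < 1 := by
    rw [hA1, hA0]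
    nlinarith [mul_le_mul_of_nonneg_left hβt hβ0.le, mul_pos ht0 hβ0]
  have hs1eq : jr + 1 - nR * p₀ = 1 := by rw [hp₀]; field_simp; ring
  have hs0eq : jr + 1 - nR * p₁ = 0 := by rw [hp₁]; field_simp; ring
  have h5 : F p₀ + -(c * A 1) ≤ F p₁ + -(c * A 0) := by
    have h := hΦle
    rw [hΦ] at h
    simp only at h
    rwa [hs1eq, hs0eq] at h
  have hFdiff : F p₀ - F p₁ < c := by
    have h6 : c * (A 1 - A 0) < c * 1 := mul_lt_mul_of_pos_left hAlt hc0
    nlinarith [h5, h6]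
  -- identify S n j and S n (j+1)
  have hnj : n - j = m + 1 := by omega
  have hnj1 : n - (j+1) = m := by omega
  have hcast1 : ((n - j : ℕ) : ℝ) = mr + 1 := by rw [hnj, hmr]; push_cast; ring
  have hcast2 : ((n - (j+1) : ℕ) : ℝ) = mr := by rw [hnj1, hmr]
  have h1p₀ : ((n - j : ℕ) : ℝ)/nR = 1 - p₀ := by
    rw [hcast1, hp₀, hnval]; field_simp; ring
  have h1p₁ : ((n - (j+1) : ℕ) : ℝ)/nR = 1 - p₁ := by
    rw [hcast2, hp₁, hnval]; field_simp; ring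
  have hSj : S n j = F p₀ := by
    unfold S
    rw [hF]
    apply Finset.sum_congr rfl
    intro k hk
    rw [← hN, ← hnR, ← hjr, h1p₀, ← hp₀]
    ring
  have hSj1 : S n (j+1) = F p₁ + Cj * (p₁^j * (1-p₁)^(N-j)) := by
    unfold S
    rw [Finset.sum_range_succ, hF]
    congr 1
    · apply Finset.sum_congr rfl
      intro k hk
      rw [← hN, ← hnR, h1p₁]
      have : ((j+1 : ℕ) : ℝ) = jr + 1 := by rw [hjr]; push_cast; ring
      rw [this, ← hp₁]
      ring
    · rw [← hN, ← hnR, h1p₁]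
      have h7 : ((j+1 : ℕ) : ℝ) = jr + 1 := by rw [hjr]; push_cast; ring
      have h8 : n - 1 - j = N - j := by rw [hN]
      rw [h7, ← hp₁, h8, hCj]
      ring
  have hceq : c = Cj * (p₁^j * (1-p₁)^(N-j)) := by
    have h1p : 1 - p₁ = mr/nR := by rw [hp₁, hnval]; field_simp; ring
    rw [hc, hp₁, h1p, ← hm, div_pow, div_pow, hNjm, pow_add]
    field_simp
  rw [hSj, hSj1, ← hceq]
  linarith [hFdiff]


lemma S_chain {n : ℕ} : ∀ {j k : ℕ}, 2 ≤ j → j ≤ k → k + 1 ≤ n → S n j ≤ S n k := by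
  intro j k hj hjk hk
  induction k with
  | zero => omega
  | succ k ih =>
    rcases Nat.eq_or_lt_of_le hjk with h | h
    · rw [h]
    · have h1 : j ≤ k := by omega
      calc S n j ≤ S n k := ih h1 (by omega)
        _ ≤ S n (k+1) := (S_step (by omega) (by omega)).le

lemma nat_ineq {K : ℕ} (hK : 2 ≤ K) : 2 * K^K < (K+1)^K := by
  have hexpand : (K+1)^K = ∑ i ∈ Finset.range (K+1), K^i * (Nat.choose K i) := by
    have := add_pow (R := ℕ) K 1 K
    simpa using this
  have hsubset : ({K-2, K-1, K} : Finset ℕ) ⊆ Finset.range (K+1) := by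
    intro i hi
    simp only [Finset.mem_insert, Finset.mem_singleton] at hi
    simp only [Finset.mem_range]
    omega
  have hsum : ∑ i ∈ ({K-2, K-1, K} : Finset ℕ), K^i * (Nat.choose K i)
      ≤ ∑ i ∈ Finset.range (K+1), K^i * (Nat.choose K i) :=
    Finset.sum_le_sum_of_subset hsubset
  have hmem1 : (K-2 : ℕ) ∉ ({K-1, K} : Finset ℕ) := by
    simp only [Finset.mem_insert, Finset.mem_singleton]; omega
  have hmem2 : (K-1 : ℕ) ∉ ({K} : Finset ℕ) := by
    simp only [Finset.mem_singleton]; omega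
  have hval : ∑ i ∈ ({K-2, K-1, K} : Finset ℕ), K^i * (Nat.choose K i)
      = K^(K-2) * (Nat.choose K (K-2)) + K^(K-1) * (Nat.choose K (K-1)) + K^K := by
    rw [Finset.sum_insert hmem1, Finset.sum_insert hmem2, Finset.sum_singleton,
      Nat.choose_self, mul_one]
    ring
  have hch1 : Nat.choose K (K-1) = K := by
    have h1 : K - (K-1) = 1 := by omega
    have := Nat.choose_symm (by omega : K - 1 ≤ K)
    rw [h1] at this
    rw [← this, Nat.choose_one_right]
  have hch2 : 1 ≤ Nat.choose K (K-2) := Nat.choose_pos (by omega)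
  have hpow1 : K^(K-1) * K = K^K := by
    rw [← pow_succ]
    congr 1
    omega
  have hpos : 1 ≤ K^(K-2) := Nat.one_le_pow _ _ (by omega)
  calc 2 * K^K < K^(K-2) * (Nat.choose K (K-2)) + K^(K-1) * (Nat.choose K (K-1)) + K^K := by
        rw [hch1, hpow1]
        have : 1 ≤ K^(K-2) * (Nat.choose K (K-2)) := Nat.one_le_iff_ne_zero.mpr (by positivity)
        omega
    _ ≤ ∑ i ∈ Finset.range (K+1), K^i * (Nat.choose K i) := by rw [← hval]; exact hsum
    _ = (K+1)^K := hexpand.symm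

lemma S_one_lt {n : ℕ} (hn : 3 ≤ n) : S n 1 < 1/2 := by
  have hS1 : S n 1 = (((n-1 : ℕ) : ℝ)/n)^(n-1) := by
    unfold S
    rw [Finset.sum_range_one]
    simp
  rw [hS1]
  have hnat := nat_ineq (K := n - 1) (by omega)
  have hK1 : n - 1 + 1 = n := by omega
  rw [hK1] at hnat
  have hcast : ((n-1:ℕ):ℝ)^(n-1) * 2 < (n:ℝ)^(n-1) := by exact_mod_cast by omega
  have hn0 : (0:ℝ) < (n:ℝ)^(n-1) := by positivity
  rw [div_pow, div_lt_iff₀ hn0]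
  linarith

/-- For positive integers `n₁ < n₂` and `X ~ Bin(n₁+n₂-1, n₂/(n₁+n₂))`,
we have `P(X ≤ n₂ - 1) > 1/2`. -/
theorem binomial_median_winning (n₁ n₂ : ℕ) (h₁ : 1 ≤ n₁) (h₁₂ : n₁ < n₂) :
    (1 : ℝ) / 2 <
      ∑ k ∈ Finset.range n₂,
        (Nat.choose (n₁ + n₂ - 1) k : ℝ) * ((n₂ : ℝ) / (n₁ + n₂)) ^ k *
          ((n₁ : ℝ) / (n₁ + n₂)) ^ (n₁ + n₂ - 1 - k) := by
  have key : S (n₁ + n₂) n₂ = ∑ k ∈ Finset.range n₂,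
      (Nat.choose (n₁ + n₂ - 1) k : ℝ) * ((n₂ : ℝ) / (n₁ + n₂)) ^ k *
        ((n₁ : ℝ) / (n₁ + n₂)) ^ (n₁ + n₂ - 1 - k) := by
    simp [S, Nat.add_sub_cancel]
  rw [← key]
  have hcompl : S (n₁ + n₂) n₁ + S (n₁ + n₂) n₂ = 1 :=
    S_compl h₁ (by omega) rfl
  suffices hlt : S (n₁ + n₂) n₁ < 1/2 by linarith
  by_cases ha : n₁ = 1
  · subst ha
    exact S_one_lt (by omega)
  · have ha2 : 2 ≤ n₁ := by omega
    have hn5 : 5 ≤ n₁ + n₂ := by omega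
    rcases Nat.even_or_odd (n₁ + n₂) with ⟨h, hh⟩ | ⟨h, hh⟩
    · -- even : n₁ + n₂ = h + h
      have hmid : S (n₁ + n₂) h + S (n₁ + n₂) h = 1 :=
        S_compl (by omega) (by omega) (by omega)
      have hh3 : 3 ≤ h := by omega
      have hlt1 : n₁ ≤ h - 1 := by omega
      have hc : S (n₁ + n₂) n₁ ≤ S (n₁ + n₂) (h-1) :=
        S_chain ha2 hlt1 (by omega)
      have hstep : S (n₁ + n₂) (h-1) < S (n₁ + n₂) (h-1+1) :=
        S_step (by omega) (by omega)
      have hfix : h - 1 + 1 = h := by omega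
      rw [hfix] at hstep
      linarith
    · -- odd : n₁ + n₂ = 2h+1
      have hmid : S (n₁ + n₂) h + S (n₁ + n₂) (h+1) = 1 :=
        S_compl (by omega) (by omega) (by omega)
      have hstep : S (n₁ + n₂) h < S (n₁ + n₂) (h+1) :=
        S_step (by omega) (by omega)
      have hc : S (n₁ + n₂) n₁ ≤ S (n₁ + n₂) h :=
        S_chain ha2 (by omega) (by omega)
      linarith

end BinomialMedianWinning
end

section
/- Let n₁, n₂ be positive integers. Then I_{n₁/(n₁+n₂)}(n₁, n₂) > 1/2 if n₁ < n₂, I_{n₁/(n₁+n₂)}(n₁, n₂) < 1/2 if n₁ > n₂, and I_{n₁/(n₁+n₂)}(n₁, n₂) = 1/2 if n₁ = n₂, where I denotes the regularized incomplete beta function. -/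
open Real

open Finset

private lemma keyIneq (i : ℕ) : ∀ l e : ℕ,
    (l + i + (l + i + 1 + e)).choose l * (l + i + 1 + e) ^ (2 * i + 1)
      ≤ (l + i + (l + i + 1 + e)).choose (l + 2 * i + 1) * (l + i + 1) ^ (2 * i + 1) := by
  induction i with
  | zero =>
    intro l e
    -- choose (l + b) l * b = choose (l+b) (l+1) * (l+1), b = l+1+e
    have h := Nat.choose_succ_right_eq (l + (l + 1 + e)) l
    simp only [Nat.add_sub_cancel_left] at h
    simpa [pow_one, mul_comm] using h.ge.trans_eq (by ring_nf)
  | succ i ih =>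
    intro l e
    have IH := ih (l + 1) e
    -- notation
    set N := l + (i + 1) + (l + (i + 1) + 1 + e) with hN
    have hN1 : l + 1 + i + (l + 1 + i + 1 + e) = N := by omega
    rw [hN1] at IH
    -- R1 : choose N l * (N - l) = choose N (l+1) * (l+1)
    have R1 : N.choose (l + 1) * (l + 1) = N.choose l * (l + 2 * i + 3 + e) := by
      have := Nat.choose_succ_right_eq N l
      have hsub : N - l = l + 2 * i + 3 + e := by omega
      rw [this, hsub]
    -- R2 : choose N (l+2i+3) * (l+2i+3) = choose N (l+2i+2) * (l + e + 1)
    have R2 : N.choose (l + 2 * i + 3) * (l + 2 * i + 3)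
        = N.choose (l + 2 * i + 2) * (l + e + 1) := by
      have := Nat.choose_succ_right_eq N (l + 2 * i + 2)
      have hsub : N - (l + 2 * i + 2) = l + e + 1 := by omega
      rw [show l + 2 * i + 2 + 1 = l + 2 * i + 3 from rfl] at this
      rw [this, hsub]
    -- main multiplied inequality
    have P' : 0 < (l + 2 * i + 3 + e) * (l + 2 * i + 3) := by positivity
    refine Nat.le_of_mul_le_mul_right ?_ P'
    have key : (l + i + 2) ^ 2 * ((l + e + 1) * (l + 2 * i + 3 + e))
        = (l + i + 2 + e) ^ 2 * ((l + 1) * (l + 2 * i + 3)) + (i+1)^2 * (e * (2*(l+i+2)+e)) := by ring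
    calc N.choose l * (l + (i+1) + 1 + e) ^ (2 * (i+1) + 1) * ((l + 2*i+3+e) * (l + 2*i+3))
        = (N.choose l * (l + 2*i+3+e)) * ((l + i + 2 + e) ^ (2*i+1) * ((l+i+2+e)^2 * (l + 2*i+3))) := by ring_nf
      _ = (N.choose (l+1) * (l + i + 2 + e) ^ (2*i+1)) * ((l+1) * ((l+i+2+e)^2 * (l + 2*i+3))) := by rw [← R1]; ring
      _ ≤ (N.choose (l + 2*i+2) * (l + i + 2) ^ (2*i+1)) * ((l+1) * ((l+i+2+e)^2 * (l + 2*i+3))) := by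
          have h2 : l + 1 + i + 1 = l + i + 2 := by omega
          have h3 : l + 1 + 2*i + 1 = l + 2*i + 2 := by omega
          rw [h2, h3] at IH
          exact Nat.mul_le_mul_right _ IH
      _ ≤ (N.choose (l + 2*i+2) * (l + i + 2) ^ (2*i+1)) * ((l+i+2)^2 * ((l + e + 1) * (l + 2*i+3+e))) := by
          refine Nat.mul_le_mul_left _ ?_
          calc (l+1) * ((l+i+2+e)^2 * (l + 2*i+3)) = (l+i+2+e)^2 * ((l+1) * (l + 2*i+3)) := by ring
            _ ≤ (l+i+2)^2 * ((l+e+1) * (l + 2*i+3+e)) := by omega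
      _ = (N.choose (l + 2*i+2) * (l + e + 1)) * ((l+i+2)^(2*i+3) * (l + 2*i+3+e)) := by ring
      _ = (N.choose (l + 2*i+3) * (l + 2*i+3)) * ((l+i+2)^(2*i+3) * (l + 2*i+3+e)) := by rw [R2]
      _ = N.choose (l + 2*(i+1)+1) * (l + (i+1) + 1) ^ (2*(i+1)+1) * ((l + 2*i+3+e) * (l + 2*i+3)) := by ring_nf

private def natSum (a b : ℕ) : ℕ :=
  ∑ j ∈ Ico a (a + b), (a + b - 1).choose j * a ^ j * b ^ (a + b - 1 - j)

lemma full_sum (a b : ℕ) (hab : 1 ≤ a + b) :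
    ∑ j ∈ range (a + b), (a + b - 1).choose j * a ^ j * b ^ (a + b - 1 - j)
      = (a + b) ^ (a + b - 1) := by
  have h := add_pow a b (a + b - 1)
  rw [show a + b - 1 + 1 = a + b by omega] at h
  rw [h]
  refine Finset.sum_congr rfl fun j hj => ?_
  simp [Nat.cast_id]
  ring

lemma claim1 (a b : ℕ) (ha : 1 ≤ a) (hab : a < b) :
    (a + b) ^ (a + b - 1) < 2 * natSum a b := by
  set n := a + b - 1 with hn
  set f : ℕ → ℕ := fun j => n.choose j * a ^ j * b ^ (n - j) with hf
  have hnat : natSum a b = ∑ j ∈ Ico a (a + b), f j := rfl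
  have hsplit : ∑ j ∈ range (a + b), f j
      = ∑ j ∈ range a, f j + natSum a b := by
    rw [hnat, Finset.range_eq_Ico,
      ← Finset.sum_Ico_consecutive f (Nat.zero_le a) (show a ≤ a + b by omega), ← Finset.range_eq_Ico]
  -- pointwise bound
  have hpt : ∀ i, i < a → f (a - 1 - i) ≤ f (a + i) := by
    intro i hi
    obtain ⟨l, hl⟩ : ∃ l, a = l + i + 1 := ⟨a - 1 - i, by omega⟩
    obtain ⟨e, he⟩ : ∃ e, b = l + i + 1 + e := ⟨b - a, by omega⟩
    have hkey := keyIneq i l e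
    have hNn : l + i + (l + i + 1 + e) = n := by omega
    rw [hNn, ← he] at hkey
    rw [show l + i + 1 = a from hl.symm] at hkey
    have h1 : a - 1 - i = l := by omega
    have h2 : a + i = l + 2 * i + 1 := by omega
    rw [h1, h2, hf]
    simp only
    have e1 : n - l = (n - (l + 2 * i + 1)) + (2 * i + 1) := by omega
    calc n.choose l * a ^ l * b ^ (n - l)
        = (n.choose l * b ^ (2 * i + 1)) * (a ^ l * b ^ (n - (l + 2 * i + 1))) := by
          rw [e1, pow_add]; ring
      _ ≤ (n.choose (l + 2 * i + 1) * a ^ (2 * i + 1)) * (a ^ l * b ^ (n - (l + 2 * i + 1))) :=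
          Nat.mul_le_mul_right _ hkey
      _ = n.choose (l + 2 * i + 1) * a ^ (l + 2 * i + 1) * b ^ (n - (l + 2 * i + 1)) := by
          rw [show l + 2*i+1 = l + (2*i+1) by omega, pow_add]; ring
  have hlow : ∑ j ∈ range a, f j ≤ ∑ i ∈ range a, f (a + i) := by
    rw [← Finset.sum_range_reflect f a]
    exact Finset.sum_le_sum fun i hi => hpt i (Finset.mem_range.mp hi)
  have hmid : ∑ i ∈ range a, f (a + i) = ∑ j ∈ Ico a (2 * a), f j := by
    rw [Finset.sum_Ico_eq_sum_range]
    refine (Finset.sum_congr (by congr 1; omega) fun i _ => rfl)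
  have htail : 0 < ∑ j ∈ Ico (2 * a) (a + b), f j := by
    refine Finset.sum_pos (fun j hj => ?_) ⟨2 * a, Finset.mem_Ico.mpr ⟨le_refl _, by omega⟩⟩
    have hj' := Finset.mem_Ico.mp hj
    have h1 : 0 < n.choose j := Nat.choose_pos (by omega)
    have h2 : 0 < a ^ j := Nat.pow_pos ha
    have h3 : 0 < b ^ (n - j) := Nat.pow_pos (by omega)
    exact Nat.mul_pos (Nat.mul_pos h1 h2) h3
  have hmid2 : ∑ j ∈ Ico a (2 * a), f j + ∑ j ∈ Ico (2 * a) (a + b), f j = natSum a b := by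
    rw [hnat]; exact Finset.sum_Ico_consecutive f (by omega) (by omega)
  have hfull : ∑ j ∈ range (a + b), f j = (a + b) ^ n := full_sum a b (by omega)
  omega

lemma claim2 (a : ℕ) (ha : 1 ≤ a) : 2 * natSum a a = (2 * a) ^ (2 * a - 1) := by
  have hchoose : ∑ j ∈ Ico a (2 * a), (2 * a - 1).choose j = 4 ^ (a - 1) := by
    have h1 : ∑ i ∈ range a, (2 * a - 1).choose i = 4 ^ (a - 1) := by
      have := Nat.sum_range_choose_halfway (a - 1)
      rw [show 2 * (a - 1) + 1 = 2 * a - 1 by omega, show a - 1 + 1 = a by omega] at this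
      exact this
    have h2 : ∑ i ∈ range (2 * a), (2 * a - 1).choose i = 2 ^ (2 * a - 1) := by
      have := Nat.sum_range_choose (2 * a - 1)
      rw [show 2 * a - 1 + 1 = 2 * a by omega] at this
      exact this
    have h3 : ∑ i ∈ range a, (2*a-1).choose i + ∑ j ∈ Ico a (2*a), (2*a-1).choose j
        = ∑ i ∈ range (2 * a), (2 * a - 1).choose i := by
      rw [Finset.range_eq_Ico, Finset.range_eq_Ico]
      exact Finset.sum_Ico_consecutive _ (Nat.zero_le a) (by omega)
    have h4 : (2:ℕ) ^ (2 * a - 1) = 2 * 4 ^ (a - 1) := by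
      rw [show 2 * a - 1 = 2 * (a - 1) + 1 by omega, pow_succ, pow_mul]
      ring
    omega
  have hterm : ∀ j ∈ Ico a (a + a), (a + a - 1).choose j * a ^ j * a ^ (a + a - 1 - j)
      = (2 * a - 1).choose j * a ^ (2 * a - 1) := by
    intro j hj
    have hj' := Finset.mem_Ico.mp hj
    rw [mul_assoc, ← pow_add, show a + a = 2 * a by ring,
      show j + (2 * a - 1 - j) = 2 * a - 1 by omega]
  rw [natSum, Finset.sum_congr rfl hterm, ← Finset.sum_mul, show a + a = 2 * a by ring, hchoose]
  rw [show (2 * a) ^ (2 * a - 1) = 2 ^ (2 * a - 1) * a ^ (2 * a - 1) by rw [mul_pow],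
    show (2:ℕ) ^ (2 * a - 1) = 2 * 4 ^ (a - 1) by
      rw [show 2 * a - 1 = 2 * (a - 1) + 1 by omega, pow_succ, pow_mul]; ring]
  ring

lemma complement (a b : ℕ) (ha : 1 ≤ a) (hb : 1 ≤ b) :
    natSum a b + natSum b a = (a + b) ^ (a + b - 1) := by
  set n := a + b - 1 with hn
  set f : ℕ → ℕ := fun j => n.choose j * a ^ j * b ^ (n - j) with hf
  have hnat : natSum a b = ∑ j ∈ Ico a (a + b), f j := rfl
  have hswap : natSum b a = ∑ j ∈ range a, f j := by
    rw [natSum, Finset.sum_Ico_eq_sum_range, show b + a - b = a by omega,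
      ← Finset.sum_range_reflect (fun i => (b + a - 1).choose (b + i) * b ^ (b + i) * a ^ (b + a - 1 - (b + i))) a]
    refine Finset.sum_congr rfl fun i hi => ?_
    have hi' : i < a := Finset.mem_range.mp hi
    have h1 : b + (a - 1 - i) = n - i := by omega
    have h2 : b + a - 1 - (b + (a - 1 - i)) = i := by omega
    rw [h2, h1, show b + a - 1 = n by omega, Nat.choose_symm (by omega), hf]
    simp only
    ring
  rw [hnat, hswap, add_comm, Finset.range_eq_Ico,
    Finset.sum_Ico_consecutive f (Nat.zero_le a) (by omega), ← Finset.range_eq_Ico]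
  exact full_sum a b (by omega)

lemma regIncBeta_eq_sum (a b : ℕ) (ha : 1 ≤ a) (hb : 1 ≤ b) (x : ℝ) :
    regIncBeta x a b = ∑ j ∈ Ico a (a + b),
      ((a + b - 1).choose j : ℝ) * x ^ j * (1 - x) ^ (a + b - 1 - j) := by
  set n := a + b - 1 with hn
  set F : ℝ → ℝ := fun y => ∑ j ∈ Ico a (a + b), ((n.choose j : ℝ)) * y ^ j * (1 - y) ^ (n - j)
    with hF
  set v : ℕ → ℝ → ℝ := fun j y => ((n.choose j * j : ℕ) : ℝ) * y ^ (j - 1) * (1 - y) ^ (n - j)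
    with hv
  -- derivative of each term
  have hterm : ∀ j ∈ Ico a (a + b), ∀ y : ℝ,
      HasDerivAt (fun x : ℝ => ((n.choose j : ℝ)) * x ^ j * (1 - x) ^ (n - j))
        (v j y - v (j + 1) y) y := by
    intro j hj y
    have hj' := Finset.mem_Ico.mp hj
    have h1 : HasDerivAt (fun x : ℝ => x ^ j) ((j : ℝ) * y ^ (j - 1)) y := hasDerivAt_pow j y
    have h2 : HasDerivAt (fun x : ℝ => (1 - x) ^ (n - j))
        (((n - j : ℕ) : ℝ) * (1 - y) ^ (n - j - 1) * (-1)) y := by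
      have hin : HasDerivAt (fun x : ℝ => 1 - x) (-1) y := (hasDerivAt_id y).const_sub 1
      exact (hasDerivAt_pow (n - j) (1 - y)).comp y hin
    have h4 : HasDerivAt (fun x : ℝ => ((n.choose j : ℝ)) * x ^ j * (1 - x) ^ (n - j))
        ((n.choose j : ℝ) * ((j : ℝ) * y ^ (j - 1) * (1 - y) ^ (n - j)
          + y ^ j * (((n - j : ℕ) : ℝ) * (1 - y) ^ (n - j - 1) * (-1)))) y := by
      simpa [mul_assoc] using (h1.mul h2).const_mul ((n.choose j : ℝ))
    have heq : v j y - v (j + 1) y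
        = (n.choose j : ℝ) * ((j : ℝ) * y ^ (j - 1) * (1 - y) ^ (n - j)
          + y ^ j * (((n - j : ℕ) : ℝ) * (1 - y) ^ (n - j - 1) * (-1))) := by
      rw [hv]
      simp only
      rw [Nat.choose_succ_right_eq n j, show n - (j + 1) = n - j - 1 by omega,
        show j + 1 - 1 = j from rfl]
      push_cast
      ring
    rw [heq]
    exact h4
  have hFderiv : ∀ y : ℝ, HasDerivAt F (v a y) y := by
    intro y
    have hsum := HasDerivAt.sum (fun j hj => hterm j hj y)
    have htel : ∑ j ∈ Ico a (a + b), (v j y - v (j + 1) y) = v a y := by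
      rw [Finset.sum_Ico_eq_sum_range, show a + b - a = b by omega]
      calc ∑ k ∈ range b, (v (a + k) y - v (a + k + 1) y)
          = ∑ k ∈ range b, ((fun i => v (a + i) y) k - (fun i => v (a + i) y) (k + 1)) := by
            refine Finset.sum_congr rfl fun k _ => by rw [show a + k + 1 = a + (k + 1) by omega]
        _ = v (a + 0) y - v (a + b) y := Finset.sum_range_sub' _ b
        _ = v a y := by
            rw [show a + 0 = a from rfl, show a + b = n + 1 by omega, hv]
            simp [Nat.choose_succ_self]
    rw [htel] at hsum
    rw [Finset.sum_fn] at hsum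
    exact hsum
  -- FTC
  have hInt : IntervalIntegrable (fun y => v a y) MeasureTheory.volume 0 x := by
    apply Continuous.intervalIntegrable
    rw [hv]
    fun_prop
  have hFTC := intervalIntegral.integral_eq_sub_of_hasDerivAt
      (f := F) (f' := fun y => v a y) (a := 0) (b := x)
      (fun y _ => hFderiv y) hInt
  have hF0 : F 0 = 0 := by
    rw [hF]
    refine Finset.sum_eq_zero fun j hj => ?_
    have hj' := Finset.mem_Ico.mp hj
    rw [zero_pow (by omega : j ≠ 0)]
    ring
  rw [hF0, sub_zero] at hFTC
  -- Gamma coefficient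
  have g1 : Real.Gamma ((a : ℝ) + (b : ℝ)) = (n.factorial : ℝ) := by
    rw [show ((a : ℝ) + (b : ℝ)) = ((n : ℕ) : ℝ) + 1 by
      rw [show ((n : ℕ) : ℝ) = ((a + b - 1 : ℕ) : ℝ) from rfl, Nat.cast_sub (by omega)]
      push_cast; ring]
    exact Real.Gamma_nat_eq_factorial n
  have g2 : Real.Gamma (a : ℝ) = ((a - 1).factorial : ℝ) := by
    rw [show ((a : ℝ)) = ((a - 1 : ℕ) : ℝ) + 1 by rw [Nat.cast_sub ha]; push_cast; ring]
    exact Real.Gamma_nat_eq_factorial (a - 1)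
  have g3 : Real.Gamma (b : ℝ) = ((b - 1).factorial : ℝ) := by
    rw [show ((b : ℝ)) = ((b - 1 : ℕ) : ℝ) + 1 by rw [Nat.cast_sub hb]; push_cast; ring]
    exact Real.Gamma_nat_eq_factorial (b - 1)
  have natid : n.choose a * a * (a - 1).factorial * (b - 1).factorial = n.factorial := by
    have h1 : a * (a - 1).factorial = a.factorial := Nat.mul_factorial_pred (by omega)
    have h2 := Nat.choose_mul_factorial_mul_factorial (show a ≤ n by omega)
    rw [show n - a = b - 1 by omega] at h2
    calc n.choose a * a * (a - 1).factorial * (b - 1).factorial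
        = n.choose a * (a * (a - 1).factorial) * (b - 1).factorial := by ring
      _ = n.choose a * a.factorial * (b - 1).factorial := by rw [h1]
      _ = n.factorial := h2
  have hGamma : Real.Gamma ((a : ℝ) + (b : ℝ)) / (Real.Gamma (a : ℝ) * Real.Gamma (b : ℝ))
      = ((n.choose a * a : ℕ) : ℝ) := by
    rw [g1, g2, g3, div_eq_iff (by positivity)]
    push_cast
    rw [← mul_assoc]
    exact_mod_cast congrArg (Nat.cast (R := ℝ)) natid.symm
  -- integrand conversion rpow → pow
  have hint : ∀ t : ℝ, t ^ ((a : ℝ) - 1) * (1 - t) ^ ((b : ℝ) - 1)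
      = t ^ (a - 1 : ℕ) * (1 - t) ^ (b - 1 : ℕ) := by
    intro t
    rw [show ((a : ℝ) - 1) = ((a - 1 : ℕ) : ℝ) by rw [Nat.cast_sub ha]; push_cast; ring,
      show ((b : ℝ) - 1) = ((b - 1 : ℕ) : ℝ) by rw [Nat.cast_sub hb]; push_cast; ring,
      Real.rpow_natCast, Real.rpow_natCast]
  have hva : ∀ t : ℝ, v a t = ((n.choose a * a : ℕ) : ℝ) * (t ^ (a - 1 : ℕ) * (1 - t) ^ (b - 1 : ℕ)) := by
    intro t
    rw [hv]
    simp only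
    rw [show n - a = b - 1 by omega]
    ring
  show (Real.Gamma ((a : ℝ) + (b : ℝ)) / (Real.Gamma (a : ℝ) * Real.Gamma (b : ℝ))) *
      (∫ t in (0:ℝ)..x, t ^ ((a : ℝ) - 1) * (1 - t) ^ ((b : ℝ) - 1)) = F x
  rw [hGamma]
  rw [intervalIntegral.integral_congr (g := fun t => t ^ (a - 1 : ℕ) * (1 - t) ^ (b - 1 : ℕ))
    (fun t _ => hint t)]
  rw [← hFTC, ← intervalIntegral.integral_const_mul]
  exact intervalIntegral.integral_congr fun t _ => (hva t).symm

lemma regIncBeta_eq_div (a b : ℕ) (ha : 1 ≤ a) (hb : 1 ≤ b) :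
    regIncBeta ((a : ℝ) / (a + b)) a b
      = (natSum a b : ℝ) / (((a + b) ^ (a + b - 1) : ℕ) : ℝ) := by
  have hs : (0 : ℝ) < (a : ℝ) + b := by positivity
  have hx : (1 : ℝ) - (a : ℝ) / ((a : ℝ) + b) = (b : ℝ) / ((a : ℝ) + b) := by
    field_simp
    ring
  rw [regIncBeta_eq_sum a b ha hb, natSum]
  push_cast
  rw [Finset.sum_div]
  refine Finset.sum_congr rfl fun j hj => ?_
  have hj' := Finset.mem_Ico.mp hj
  rw [hx, div_pow, div_pow]
  rw [show ((a : ℝ) + b) ^ (a + b - 1) = ((a : ℝ) + b) ^ j * ((a : ℝ) + b) ^ (a + b - 1 - j) by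
    rw [← pow_add, show j + (a + b - 1 - j) = a + b - 1 by omega]]
  field_simp

/-- For positive integers `n₁, n₂`: `I_{n₁/(n₁+n₂)}(n₁,n₂)` is `> 1/2` if `n₁ < n₂`,
`< 1/2` if `n₁ > n₂`, and `= 1/2` if `n₁ = n₂`. -/
theorem regIncBeta_half_trichotomy (n₁ n₂ : ℕ) (h₁ : 1 ≤ n₁) (h₂ : 1 ≤ n₂) :
    (n₁ < n₂ → regIncBeta ((n₁ : ℝ) / (n₁ + n₂)) n₁ n₂ > 1 / 2) ∧
    (n₂ < n₁ → regIncBeta ((n₁ : ℝ) / (n₁ + n₂)) n₁ n₂ < 1 / 2) ∧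
    (n₁ = n₂ → regIncBeta ((n₁ : ℝ) / (n₁ + n₂)) n₁ n₂ = 1 / 2) := by
  have hD : (0 : ℝ) < (((n₁ + n₂) ^ (n₁ + n₂ - 1) : ℕ) : ℝ) := by
    have : 0 < (n₁ + n₂) ^ (n₁ + n₂ - 1) := Nat.pow_pos (by omega)
    exact_mod_cast this
  rw [regIncBeta_eq_div n₁ n₂ h₁ h₂]
  refine ⟨fun hlt => ?_, fun hgt => ?_, fun heq => ?_⟩
  · rw [gt_iff_lt, div_lt_div_iff₀ (by norm_num) hD]
    have := claim1 n₁ n₂ h₁ hlt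
    exact_mod_cast by push_cast; linarith [(by exact_mod_cast this : ((n₁+n₂)^(n₁+n₂-1) : ℝ) < 2 * (natSum n₁ n₂ : ℝ))]
  · rw [div_lt_div_iff₀ hD (by norm_num)]
    have hc1 := claim1 n₂ n₁ h₂ hgt
    have hc2 := complement n₁ n₂ h₁ h₂
    rw [show n₂ + n₁ = n₁ + n₂ by omega] at hc1
    have : 2 * natSum n₁ n₂ < (n₁ + n₂) ^ (n₁ + n₂ - 1) := by omega
    exact_mod_cast by push_cast; linarith [(by exact_mod_cast this : 2 * (natSum n₁ n₂ : ℝ) < ((n₁+n₂)^(n₁+n₂-1) : ℝ))]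
  · subst heq
    rw [div_eq_div_iff hD.ne' (by norm_num : (2:ℝ) ≠ 0)]
    have := claim2 n₁ h₁
    rw [show 2 * n₁ = n₁ + n₁ by omega] at this
    exact_mod_cast by
      push_cast
      linarith [(by exact_mod_cast this : 2 * (natSum n₁ n₁ : ℝ) = ((n₁+n₁)^(n₁+n₁-1) : ℝ))]
end

section
/- Consider the random walk R on ℤ^m with R₀ = 0 and steps e_ℓ with probabilities p_ℓ > 0 summing to 1, and the centered walk R̃_n = R_n − (n/m)·(1,…,1). If p_j ≠ 1/m for some j, then R̃ is transient; if p_j = 1/m for all j, then R̃ is recurrent for m ≤ 3 and transient for m ≥ 4. -/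
open Real Filter Stirling

private lemma aux_fact_add_le (a b : ℕ) : (a + b).factorial ≤ (a + b) ^ b * a.factorial := by
  induction b with
  | zero => simp
  | succ b ih =>
    have h : a + (b + 1) = (a + b) + 1 := by ring
    rw [h, Nat.factorial_succ]
    calc (a + b + 1) * (a + b).factorial
        ≤ (a + b + 1) * ((a + b) ^ b * a.factorial) := Nat.mul_le_mul_left _ ih
      _ ≤ (a + b + 1) * ((a + b + 1) ^ b * a.factorial) := by
          exact Nat.mul_le_mul_left _ (Nat.mul_le_mul_right _
            (Nat.pow_le_pow_left (Nat.le_succ (a + b)) b))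
      _ = (a + b + 1) ^ (b + 1) * a.factorial := by ring

private lemma aux_multi_le (m k : ℕ) : (m * k).factorial ≤ m ^ (m * k) * (k.factorial) ^ m := by
  induction k with
  | zero => simp
  | succ k ih =>
    have h : m * (k + 1) = m * k + m := by ring
    calc (m * (k + 1)).factorial = (m * k + m).factorial := by rw [h]
      _ ≤ (m * k + m) ^ m * (m * k).factorial := aux_fact_add_le _ _
      _ = (m * (k + 1)) ^ m * (m * k).factorial := by rw [h]
      _ ≤ (m * (k + 1)) ^ m * (m ^ (m * k) * k.factorial ^ m) := Nat.mul_le_mul_left _ ih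
      _ = m ^ (m * (k + 1)) * ((k + 1).factorial) ^ m := by
          rw [Nat.factorial_succ, Nat.mul_pow, Nat.mul_pow,
            show m * (k + 1) = m * k + m from by ring, pow_add]
          ring

private lemma aux_sqrtpi_le (n : ℕ) : Real.sqrt π ≤ stirlingSeq (n + 1) :=
  stirlingSeq'_antitone.le_of_tendsto
    (tendsto_stirlingSeq_sqrt_pi.comp (tendsto_add_atTop_nat 1)) n

private lemma aux_le_B (n : ℕ) : stirlingSeq (n + 1) ≤ Real.exp 1 / Real.sqrt 2 := by
  have h := stirlingSeq'_antitone (Nat.zero_le n)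
  simpa [stirlingSeq_one] using h

private lemma aux_sqrtpi_le' (n : ℕ) : Real.sqrt π ≤ stirlingSeq (n + 1) :=
  stirlingSeq'_antitone.le_of_tendsto
    (tendsto_stirlingSeq_sqrt_pi.comp (tendsto_add_atTop_nat 1)) n

private lemma aux_le_B' (n : ℕ) : stirlingSeq (n + 1) ≤ Real.exp 1 / Real.sqrt 2 := by
  have h := stirlingSeq'_antitone (Nat.zero_le n)
  simpa [stirlingSeq_one] using h

private lemma aux_fact_eq (n : ℕ) (hn : n ≠ 0) :
    (n.factorial : ℝ) = stirlingSeq n * (Real.sqrt (2 * n) * ((n : ℝ) / Real.exp 1) ^ n) := by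
  have hn0 : (0:ℝ) < (n : ℝ) := by exact_mod_cast Nat.pos_of_ne_zero hn
  have hd : (0:ℝ) < Real.sqrt (2 * n) * ((n : ℝ) / Real.exp 1) ^ n := by positivity
  rw [stirlingSeq, div_mul_cancel₀]
  exact hd.ne'

-- central term bounds
private lemma aux_central (m k : ℕ) (hm : 1 ≤ m) (hk : 1 ≤ k) :
    Real.sqrt π / (Real.exp 1 / Real.sqrt 2) ^ m *
        (Real.sqrt m / (Real.sqrt (2 * k)) ^ (m - 1))
      ≤ ((m * k).factorial : ℝ) / ((k.factorial : ℝ)) ^ m * ((1 : ℝ) / m) ^ (m * k) ∧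
    ((m * k).factorial : ℝ) / ((k.factorial : ℝ)) ^ m * ((1 : ℝ) / m) ^ (m * k)
      ≤ (Real.exp 1 / Real.sqrt 2) / (Real.sqrt π) ^ m *
        (Real.sqrt m / (Real.sqrt (2 * k)) ^ (m - 1)) := by
  have hm0 : (0:ℝ) < (m:ℝ) := by exact_mod_cast hm
  have hk0 : (0:ℝ) < (k:ℝ) := by exact_mod_cast hk
  have hA : (0:ℝ) < Real.sqrt π := Real.sqrt_pos.2 Real.pi_pos
  have hB : (0:ℝ) < Real.exp 1 / Real.sqrt 2 := by positivity
  have hsk : (0:ℝ) < Real.sqrt (2 * k) := Real.sqrt_pos.2 (by positivity)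
  have hX : (0:ℝ) < ((k:ℝ) / Real.exp 1) ^ k := by positivity
  -- stirling values
  set Sn := stirlingSeq (m * k) with hSn
  set Sk := stirlingSeq k with hSk
  have hmk0 : m * k ≠ 0 := by positivity
  have hSnb : Real.sqrt π ≤ Sn ∧ Sn ≤ Real.exp 1 / Real.sqrt 2 := by
    obtain ⟨j, hj⟩ := Nat.exists_eq_succ_of_ne_zero hmk0
    rw [hSn, hj]; exact ⟨aux_sqrtpi_le' j, aux_le_B' j⟩
  have hSkb : Real.sqrt π ≤ Sk ∧ Sk ≤ Real.exp 1 / Real.sqrt 2 := by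
    obtain ⟨j, hj⟩ := Nat.exists_eq_succ_of_ne_zero (by omega : k ≠ 0)
    rw [hSk, hj]; exact ⟨aux_sqrtpi_le' j, aux_le_B' j⟩
  have hSn0 : (0:ℝ) < Sn := lt_of_lt_of_le hA hSnb.1
  have hSk0 : (0:ℝ) < Sk := lt_of_lt_of_le hA hSkb.1
  have hfn : ((m * k).factorial : ℝ)
      = Sn * (Real.sqrt (2 * ((m:ℝ) * k)) * ((m:ℝ) * k / Real.exp 1) ^ (m * k)) := by
    have := aux_fact_eq (m * k) hmk0
    push_cast at this ⊢
    convert this using 4 <;> push_cast <;> ring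
  have hfk : (k.factorial : ℝ)
      = Sk * (Real.sqrt (2 * (k:ℝ)) * ((k:ℝ) / Real.exp 1) ^ k) := by
    have := aux_fact_eq k (by omega)
    push_cast at this ⊢
    exact this
  -- identity
  have e2 : Real.sqrt (2 * ((m:ℝ) * k)) = Real.sqrt m * Real.sqrt (2 * k) := by
    rw [show (2:ℝ) * ((m:ℝ) * k) = (m:ℝ) * (2 * k) from by ring,
      Real.sqrt_mul hm0.le]
  have e3 : (Real.sqrt (2 * (k:ℝ))) ^ m
      = (Real.sqrt (2 * (k:ℝ))) ^ (m - 1) * Real.sqrt (2 * (k:ℝ)) := by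
    conv_lhs => rw [show m = (m - 1) + 1 from (Nat.succ_pred_eq_of_pos hm).symm]
    rw [pow_succ]
  have e1 : ((m:ℝ) * k / Real.exp 1) ^ (m * k) * ((1:ℝ) / m) ^ (m * k)
      = ((k:ℝ) / Real.exp 1) ^ (m * k) := by
    rw [← mul_pow]; congr 1; field_simp
  have hkey : Real.sqrt (2 * ((m:ℝ) * k)) * ((m:ℝ) * k / Real.exp 1) ^ (m * k)
        * ((1:ℝ) / m) ^ (m * k)
        / (Real.sqrt (2 * (k:ℝ)) * ((k:ℝ) / Real.exp 1) ^ k) ^ m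
      = Real.sqrt m / (Real.sqrt (2 * k)) ^ (m - 1) := by
    rw [mul_assoc, e1, e2, mul_pow, ← pow_mul, e3,
      show k * m = m * k from mul_comm k m]
    rw [div_eq_div_iff (by positivity) (by positivity)]
    ring
  -- c as product
  have hc : ((m * k).factorial : ℝ) / ((k.factorial : ℝ)) ^ m * ((1 : ℝ) / m) ^ (m * k)
      = (Sn / Sk ^ m) *
        (Real.sqrt (2 * ((m:ℝ) * k)) * ((m:ℝ) * k / Real.exp 1) ^ (m * k)
          * ((1:ℝ) / m) ^ (m * k)
          / (Real.sqrt (2 * (k:ℝ)) * ((k:ℝ) / Real.exp 1) ^ k) ^ m) := by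
    rw [hfn, hfk]
    have h1 : Real.sqrt (2 * (k:ℝ)) * ((k:ℝ) / Real.exp 1) ^ k ≠ 0 := by positivity
    field_simp
    ring
  rw [hc, hkey]
  have hT : (0:ℝ) ≤ Real.sqrt m / (Real.sqrt (2 * k)) ^ (m - 1) := by positivity
  constructor
  · refine mul_le_mul_of_nonneg_right ?_ hT
    exact div_le_div₀ (by positivity) hSnb.1 (by positivity)
      (pow_le_pow_left₀ hSk0.le hSkb.2 m)
  · refine mul_le_mul_of_nonneg_right ?_ hT
    exact div_le_div₀ (by positivity) hSnb.2 (by positivity)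
      (pow_le_pow_left₀ hA.le hSkb.1 m)

/-- Recurrence/transience of the centered multinomial walk `R̃`. The walk returns to `0`
at time `n` iff `m ∣ n` and each direction was taken exactly `n/m` times, so
`P(R̃_n = 0) = n!/((n/m)!)^m · ∏ p_j^(n/m)` when `m ∣ n` and `0` otherwise.
By the standard criterion, `R̃` is recurrent iff `Σ_n P(R̃_n = 0) = ∞`, i.e. iff this
(nonnegative) sequence is not summable. If some `p_j ≠ 1/m` the walk is transient;
if all `p_j = 1/m` it is recurrent for `m ≤ 3` and transient for `m ≥ 4`. -/
theorem multinomial_walk_recurrence_transience (m : ℕ) (hm : 2 ≤ m) (p : Fin m → ℝ)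
    (hp : ∀ j, 0 < p j) (hsum : ∑ j, p j = 1) :
    ((∃ j, p j ≠ 1 / m) →
      Summable (fun n : ℕ =>
        if m ∣ n then
          (Nat.factorial n : ℝ) / (Nat.factorial (n / m) : ℝ) ^ m * ∏ j, p j ^ (n / m)
        else 0)) ∧
    ((∀ j, p j = 1 / m) →
      ((m ≤ 3 → ¬ Summable (fun n : ℕ =>
          if m ∣ n then
            (Nat.factorial n : ℝ) / (Nat.factorial (n / m) : ℝ) ^ m * ∏ j, p j ^ (n / m)
          else 0)) ∧
       (4 ≤ m → Summable (fun n : ℕ =>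
          if m ∣ n then
            (Nat.factorial n : ℝ) / (Nat.factorial (n / m) : ℝ) ^ m * ∏ j, p j ^ (n / m)
          else 0)))) := by
  have hm0 : m ≠ 0 := by omega
  have hmR : (0:ℝ) < (m:ℝ) := by exact_mod_cast Nat.pos_of_ne_zero hm0
  set F : ℕ → ℝ := fun n : ℕ =>
      if m ∣ n then
        (Nat.factorial n : ℝ) / (Nat.factorial (n / m) : ℝ) ^ m * ∏ j, p j ^ (n / m)
      else 0 with hF
  have hinj : Function.Injective (fun k : ℕ => m * k) := fun a b h => by
    simpa [hm0] using h
  have hvan : ∀ x ∉ Set.range (fun k : ℕ => m * k), F x = 0 := by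
    intro x hx
    have hnd : ¬ m ∣ x := by
      rintro ⟨c, rfl⟩; exact hx ⟨c, rfl⟩
    simp [hF, hnd]
  have key : Summable ((fun n => F n) ∘ fun k : ℕ => m * k) ↔ Summable F :=
    hinj.summable_iff hvan
  have Feval : ∀ k, F (m * k)
      = ((m * k).factorial : ℝ) / ((k.factorial : ℝ)) ^ m * ∏ j, p j ^ k := by
    intro k
    have h1 : m ∣ m * k := Dvd.intro k rfl
    have h2 : m * k / m = k := Nat.mul_div_cancel_left k (Nat.pos_of_ne_zero hm0)
    simp [hF, h1, h2]
  have hFnn : ∀ n, 0 ≤ F n := by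
    intro n; rw [hF]; dsimp only; split
    · refine mul_nonneg (div_nonneg (Nat.cast_nonneg _) (by positivity)) ?_
      exact Finset.prod_nonneg fun j _ => pow_nonneg (hp j).le _
    · exact le_refl 0
  constructor
  · rintro ⟨j0, hj0⟩
    -- strict AM-GM: ∏ p < (1/m)^m
    have hpair : ∃ a ∈ Finset.univ, ∃ b ∈ (Finset.univ : Finset (Fin m)), p a ≠ p b := by
      by_contra hcon
      push_neg at hcon
      have hconst : ∀ a, p a = p j0 := fun a =>
        hcon a (Finset.mem_univ a) j0 (Finset.mem_univ j0)
      have hsum' : (1:ℝ) = m * p j0 := by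
        rw [← hsum, Finset.sum_congr rfl (fun x _ => hconst x), Finset.sum_const,
          Finset.card_univ, Fintype.card_fin, nsmul_eq_mul]
      apply hj0
      field_simp
      linarith [hsum']
    have hjensen := strictConcaveOn_log_Ioi.lt_map_sum (t := Finset.univ)
      (w := fun _ : Fin m => 1 / (m:ℝ)) (p := p)
      (fun i _ => by positivity)
      (by rw [Finset.sum_const, Finset.card_univ, Fintype.card_fin, nsmul_eq_mul]; field_simp)
      (fun i _ => hp i) hpair
    have hL : ∑ i, (1 / (m:ℝ)) • Real.log (p i) = (1/(m:ℝ)) * Real.log (∏ j, p j) := by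
      rw [Real.log_prod (fun i _ => (hp i).ne'), Finset.mul_sum]
      simp [smul_eq_mul]
    have hR : ∑ i, (1 / (m:ℝ)) • p i = 1/(m:ℝ) := by
      simp only [smul_eq_mul, ← Finset.mul_sum, hsum, mul_one]
    rw [hL, hR] at hjensen
    have hlog : Real.log (∏ j, p j) < Real.log ((1/(m:ℝ))^m) := by
      rw [Real.log_pow]
      have := (mul_lt_mul_iff_right₀ hmR).2 hjensen
      calc Real.log (∏ j, p j) = (m:ℝ) * ((1/(m:ℝ)) * Real.log (∏ j, p j)) := by
            field_simp
        _ < (m:ℝ) * Real.log (1/(m:ℝ)) := this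
        _ = (m:ℕ) * Real.log (1/(m:ℝ)) := by norm_num
    have hprodpos : (0:ℝ) < ∏ j, p j := Finset.prod_pos (fun i _ => hp i)
    have hPlt : ∏ j, p j < (1/(m:ℝ))^m := by
      have h := Real.exp_lt_exp.2 hlog
      rwa [Real.exp_log hprodpos, Real.exp_log (by positivity)] at h
    set r : ℝ := (m:ℝ)^m * ∏ j, p j with hr
    have hr0 : 0 ≤ r := by positivity
    have hr1 : r < 1 := by
      have h := (mul_lt_mul_iff_right₀ (show (0:ℝ) < (m:ℝ)^m by positivity)).2 hPlt
      have h2 : (m:ℝ)^m * (1/(m:ℝ))^m = 1 := by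
        rw [← mul_pow]; field_simp; exact one_pow m
      rw [h2] at h; exact h
    have hbound : ∀ k : ℕ, F (m * k) ≤ r ^ k := by
      intro k
      rw [Feval k]
      have hfacpos : (0:ℝ) < ((k.factorial : ℝ)) ^ m := by positivity
      have hfle : ((m * k).factorial : ℝ) ≤ (m:ℝ)^(m*k) * ((k.factorial : ℝ))^m := by
        exact_mod_cast aux_multi_le m k
      have hprodpow : (∏ j, p j ^ k) = (∏ j, p j)^k := by
        rw [Finset.prod_pow]
      rw [hprodpow]
      calc ((m * k).factorial : ℝ) / ((k.factorial : ℝ))^m * (∏ j, p j)^k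
          ≤ ((m:ℝ)^(m*k) * ((k.factorial : ℝ))^m) / ((k.factorial : ℝ))^m * (∏ j, p j)^k := by
            refine mul_le_mul_of_nonneg_right ?_ (by positivity)
            gcongr
        _ = (m:ℝ)^(m*k) * (∏ j, p j)^k := by
            rw [mul_div_assoc, div_self hfacpos.ne', mul_one]
        _ = r ^ k := by
            rw [hr, mul_pow, ← pow_mul]
    exact key.1 (Summable.of_nonneg_of_le (fun k => hFnn _) hbound
      (summable_geometric_of_lt_one hr0 hr1))
  · intro hp2
    have Feval2 : ∀ k, F (m * k)
        = ((m * k).factorial : ℝ) / ((k.factorial : ℝ)) ^ m * ((1:ℝ)/m)^(m*k) := by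
      intro k
      rw [Feval k]
      congr 1
      simp only [hp2]
      rw [Finset.prod_const, Finset.card_univ, Fintype.card_fin, ← pow_mul, mul_comm]
    have hA : (0:ℝ) < Real.sqrt π := Real.sqrt_pos.2 Real.pi_pos
    have hB : (0:ℝ) < Real.exp 1 / Real.sqrt 2 := by positivity
    have hsq1 : ∀ k : ℕ, (1:ℝ) ≤ Real.sqrt (2 * ((k:ℝ)+1)) := by
      intro k
      have h : Real.sqrt 1 ≤ Real.sqrt (2 * ((k:ℝ)+1)) := by
        apply Real.sqrt_le_sqrt
        have : (0:ℝ) ≤ (k:ℝ) := Nat.cast_nonneg k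
        linarith
      rwa [Real.sqrt_one] at h
    constructor
    · intro hm3 hS
      have hg : Summable (fun k : ℕ => F (m * k)) := key.2 hS
      have hg1 : Summable (fun k : ℕ => F (m * (k + 1))) :=
        (summable_nat_add_iff (f := fun k : ℕ => F (m * k)) 1).2 hg
      set C1 : ℝ := Real.sqrt π / (Real.exp 1 / Real.sqrt 2) ^ m * Real.sqrt m with hC1
      have hC1pos : 0 < C1 := by positivity
      have hlow : ∀ k : ℕ, C1 / 2 * (1/((k:ℝ)+1)) ≤ F (m * (k + 1)) := by
        intro k
        have h := (aux_central m (k+1) (by omega) (by omega)).1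
        rw [← Feval2 (k+1)] at h
        refine le_trans ?_ h
        push_cast
        have hDle : (Real.sqrt (2 * ((k:ℝ)+1))) ^ (m - 1) ≤ 2 * ((k:ℝ)+1) := by
          have h1 : (Real.sqrt (2 * ((k:ℝ)+1))) ^ (m - 1)
              ≤ (Real.sqrt (2 * ((k:ℝ)+1))) ^ 2 :=
            pow_le_pow_right₀ (hsq1 k) (by omega)
          have h2 : (Real.sqrt (2 * ((k:ℝ)+1))) ^ 2 = 2 * ((k:ℝ)+1) :=
            Real.sq_sqrt (by positivity)
          linarith
        have hDpos : (0:ℝ) < (Real.sqrt (2 * ((k:ℝ)+1))) ^ (m - 1) := by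
          have := hsq1 k; positivity
        calc C1 / 2 * (1/((k:ℝ)+1))
            = Real.sqrt π / (Real.exp 1 / Real.sqrt 2) ^ m
              * (Real.sqrt m / (2 * ((k:ℝ)+1))) := by
              rw [hC1]; field_simp
          _ ≤ Real.sqrt π / (Real.exp 1 / Real.sqrt 2) ^ m
              * (Real.sqrt m / (Real.sqrt (2 * ((k:ℝ)+1))) ^ (m-1)) := by
              refine mul_le_mul_of_nonneg_left ?_ (by positivity)
              exact div_le_div_of_nonneg_left (Real.sqrt_nonneg _) hDpos hDle
      have hsum1 : Summable (fun k : ℕ => C1 / 2 * (1/((k:ℝ)+1))) :=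
        Summable.of_nonneg_of_le (fun k => by positivity) hlow hg1
      have hsum2 : Summable (fun k : ℕ => 1/((k:ℝ)+1)) := by
        have h := hsum1.mul_left (C1/2)⁻¹
        exact h.congr fun k => by
          rw [← mul_assoc, inv_mul_cancel₀ (by positivity : (C1/2) ≠ 0), one_mul]
      apply Real.not_summable_one_div_natCast
      refine (summable_nat_add_iff (f := fun n : ℕ => 1/(n:ℝ)) 1).1 ?_
      simpa using hsum2
    · intro hm4
      apply key.1
      refine (summable_nat_add_iff (f := fun k : ℕ => F (m * k)) 1).1 ?_
      set C2 : ℝ := (Real.exp 1 / Real.sqrt 2) / (Real.sqrt π) ^ m * Real.sqrt m with hC2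
      have hC2pos : 0 < C2 := by positivity
      have hup : ∀ k : ℕ, F (m * (k + 1)) ≤ C2 * (1/(((k:ℝ)+1) ^ ((3:ℝ)/2))) := by
        intro k
        have h := (aux_central m (k+1) (by omega) (by omega)).2
        rw [← Feval2 (k+1)] at h
        refine le_trans h ?_
        push_cast
        have hrw : (((k:ℝ)+1) ^ ((3:ℝ)/2)) = (Real.sqrt ((k:ℝ)+1)) ^ (3:ℕ) := by
          rw [← Real.rpow_natCast (Real.sqrt ((k:ℝ)+1)) 3, Real.sqrt_eq_rpow,
            ← Real.rpow_mul (by positivity)]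
          norm_num
        have hge : (((k:ℝ)+1) ^ ((3:ℝ)/2)) ≤ (Real.sqrt (2 * ((k:ℝ)+1))) ^ (m-1) := by
          rw [hrw]
          calc (Real.sqrt ((k:ℝ)+1)) ^ (3:ℕ)
              ≤ (Real.sqrt (2 * ((k:ℝ)+1))) ^ (3:ℕ) := by
                refine pow_le_pow_left₀ (Real.sqrt_nonneg _) ?_ 3
                apply Real.sqrt_le_sqrt
                have : (0:ℝ) ≤ (k:ℝ) := Nat.cast_nonneg k
                linarith
            _ ≤ (Real.sqrt (2 * ((k:ℝ)+1))) ^ (m-1) :=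
                pow_le_pow_right₀ (hsq1 k) (by omega)
        have hrppos : (0:ℝ) < ((k:ℝ)+1) ^ ((3:ℝ)/2) := by positivity
        calc (Real.exp 1 / Real.sqrt 2) / (Real.sqrt π) ^ m
              * (Real.sqrt m / (Real.sqrt (2 * ((k:ℝ)+1))) ^ (m-1))
            ≤ (Real.exp 1 / Real.sqrt 2) / (Real.sqrt π) ^ m
              * (Real.sqrt m / (((k:ℝ)+1) ^ ((3:ℝ)/2))) := by
              refine mul_le_mul_of_nonneg_left ?_ (by positivity)
              exact div_le_div_of_nonneg_left (Real.sqrt_nonneg _) hrppos hge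
          _ = C2 * (1/(((k:ℝ)+1) ^ ((3:ℝ)/2))) := by rw [hC2]; ring
      have hmaj : Summable (fun k : ℕ => C2 * (1/(((k:ℝ)+1) ^ ((3:ℝ)/2)))) := by
        have h0 : Summable (fun n : ℕ => 1/((n:ℝ) ^ ((3:ℝ)/2))) :=
          Real.summable_one_div_nat_rpow.2 (by norm_num)
        have h1 := (summable_nat_add_iff (f := fun n : ℕ => 1/((n:ℝ) ^ ((3:ℝ)/2))) 1).2 h0
        have h2 : Summable (fun n : ℕ => 1/(((n:ℝ)+1) ^ ((3:ℝ)/2))) := by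
          simpa using h1
        exact h2.mul_left C2
      exact Summable.of_nonneg_of_le (fun k => hFnn _) hup hmaj
end

section
/- The multinomial return probability satisfies: for m ≥ 2 and p₁ = ⋯ = p_m = 1/m, the probability p₀₀^{(mk)} = (mk)!/(k!)^m · m^{-mk} is asymptotically C_m · k^{-(m-1)/2} as k → ∞, where C_m = √m / (2π)^{(m-1)/2}. In particular, Σ_k p₀₀^{(mk)} = ∞ iff m ≤ 3. -/
open Filter Real Asymptotics Stirling

private lemma stirlingSeq_pos' {n : ℕ} (hn : n ≠ 0) : 0 < stirlingSeq n := by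
  obtain ⟨j, rfl⟩ := Nat.exists_eq_succ_of_ne_zero hn
  exact stirlingSeq'_pos j

/-- Key algebraic identity relating the return probability to Stirling sequences. -/
private lemma return_prob_eq (m : ℕ) (hm : 2 ≤ m) (k : ℕ) (hk : 1 ≤ k) :
    ((Nat.factorial (m * k) : ℝ) / (Nat.factorial k : ℝ) ^ m / (m : ℝ) ^ (m * k))
    = stirlingSeq (m * k) / (stirlingSeq k) ^ m * Real.sqrt m *
        (2 * (k : ℝ)) ^ (-(((m : ℝ) - 1) / 2)) := by
  have hm0 : (0:ℝ) < m := by positivity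
  have hk0 : (0:ℝ) < k := by exact_mod_cast hk
  have hK2 : (0:ℝ) < 2 * (k:ℝ) := by linarith
  have hsmk : 0 < stirlingSeq (m * k) := stirlingSeq_pos' (by positivity)
  have hsk : 0 < stirlingSeq k := stirlingSeq_pos' (by omega)
  have hden1 : (0:ℝ) < √(2 * (m*k : ℕ) : ℝ) * (((m*k : ℕ):ℝ) / exp 1) ^ (m*k) := by
    have : (0:ℝ) < ((m*k:ℕ):ℝ) := by positivity
    positivity
  have hden2 : (0:ℝ) < √(2 * (k : ℕ) : ℝ) * (((k : ℕ):ℝ) / exp 1) ^ k := by positivity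
  have h1 : ((Nat.factorial (m*k) : ℝ)) = stirlingSeq (m*k) *
      (√(2 * (m*k : ℕ) : ℝ) * (((m*k : ℕ):ℝ) / exp 1) ^ (m*k)) := by
    rw [stirlingSeq]; field_simp
  have h2 : ((Nat.factorial k : ℝ)) = stirlingSeq k *
      (√(2 * (k : ℕ) : ℝ) * (((k : ℕ):ℝ) / exp 1) ^ k) := by
    rw [stirlingSeq]; field_simp
  rw [h1, h2]
  have hcast : ((m*k : ℕ):ℝ) = (m:ℝ) * (k:ℝ) := by push_cast; ring
  have hmkpow : (((m*k : ℕ):ℝ) / exp 1) ^ (m*k)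
      = (m:ℝ) ^ (m*k) * ((k:ℝ) / exp 1) ^ (m*k) := by
    rw [hcast, mul_div_assoc, mul_pow]
  have hsq : √(2 * (m*k : ℕ) : ℝ) = √(m:ℝ) * √(2 * (k:ℝ)) := by
    rw [hcast, show (2:ℝ) * ((m:ℝ)*(k:ℝ)) = (m:ℝ) * (2 * (k:ℝ)) by ring,
      Real.sqrt_mul hm0.le]
  have hrp : (2 * (k:ℝ)) ^ (-(((m : ℝ) - 1) / 2))
      = √(2 * (k:ℝ)) / (√(2 * (k:ℝ))) ^ m := by
    rw [Real.sqrt_eq_rpow, ← Real.rpow_natCast ((2*(k:ℝ)) ^ ((1:ℝ)/2)) m,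
      ← Real.rpow_mul hK2.le, ← Real.rpow_sub hK2]
    ring_nf
  rw [hmkpow, hsq, hrp]
  have hE : (0:ℝ) < (k:ℝ) / exp 1 := by positivity
  have hs2 : (0:ℝ) < √(2 * (k:ℝ)) := Real.sqrt_pos.mpr hK2
  field_simp
  ring_nf

/-- For the symmetric multinomial walk (`p₁ = ⋯ = p_m = 1/m`), the return probability
`p₀₀^{(mk)} = (mk)!/(k!)^m · m^{-mk}` satisfies
`p₀₀^{(mk)} ∼ C_m · k^{-(m-1)/2}` with `C_m = √m/(2π)^{(m-1)/2}`, and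
`Σ_{k≥1} p₀₀^{(mk)} = ∞` iff `m ≤ 3`. -/
theorem multinomial_return_asymptotics (m : ℕ) (hm : 2 ≤ m) :
    Tendsto (fun k : ℕ =>
        ((Nat.factorial (m * k) : ℝ) / (Nat.factorial k : ℝ) ^ m / (m : ℝ) ^ (m * k)) /
          ((Real.sqrt m / (2 * Real.pi) ^ (((m : ℝ) - 1) / 2)) *
            (k : ℝ) ^ (-((m : ℝ) - 1) / 2)))
      atTop (nhds 1) ∧
    (¬ Summable (fun k : ℕ =>
        (Nat.factorial (m * (k + 1)) : ℝ) / (Nat.factorial (k + 1) : ℝ) ^ m /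
          (m : ℝ) ^ (m * (k + 1))) ↔ m ≤ 3) := by
  have hm0 : (0:ℝ) < m := by positivity
  have hπ : (0:ℝ) < Real.pi := Real.pi_pos
  set e : ℝ := ((m : ℝ) - 1) / 2 with he
  have hC : (0:ℝ) < Real.sqrt m / (2 * Real.pi) ^ e := by positivity
  set C : ℝ := Real.sqrt m / (2 * Real.pi) ^ e with hCdef
  -- target denominator rewrite
  have hden : ∀ k : ℕ, 1 ≤ k →
      C * (k:ℝ) ^ (-e) = Real.sqrt m * (2 * (k:ℝ)) ^ (-e) * Real.pi ^ (-e) := by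
    intro k hk
    have hk0 : (0:ℝ) < k := by exact_mod_cast hk
    rw [hCdef, show (2:ℝ) * Real.pi = Real.pi * 2 by ring,
      Real.mul_rpow hπ.le (by norm_num : (0:ℝ) ≤ 2),
      show (2:ℝ) * (k:ℝ) = 2 * (k:ℝ) by ring,
      Real.mul_rpow (by norm_num : (0:ℝ) ≤ 2) hk0.le,
      Real.rpow_neg hπ.le, Real.rpow_neg (by norm_num : (0:ℝ) ≤ 2)]
    field_simp
  -- ratio identity
  have hratio : ∀ k : ℕ, 1 ≤ k →
      ((Nat.factorial (m * k) : ℝ) / (Nat.factorial k : ℝ) ^ m / (m : ℝ) ^ (m * k)) /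
        (C * (k:ℝ) ^ (-e))
      = stirlingSeq (m * k) / (stirlingSeq k) ^ m * Real.pi ^ e := by
    intro k hk
    have hk0 : (0:ℝ) < k := by exact_mod_cast hk
    have hK2 : (0:ℝ) < 2 * (k:ℝ) := by linarith
    rw [return_prob_eq m hm k hk, hden k hk, Real.rpow_neg hπ.le]
    have h1 : (0:ℝ) < √(m:ℝ) := Real.sqrt_pos.mpr hm0
    have h2 : (0:ℝ) < (2 * (k:ℝ)) ^ (-e) := Real.rpow_pos_of_pos hK2 _
    have h3 : (0:ℝ) < Real.pi ^ e := Real.rpow_pos_of_pos hπ _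
    have hB : Real.sqrt (m:ℝ) * (2*(k:ℝ)) ^ (-e) * (Real.pi ^ e)⁻¹ ≠ 0 := by positivity
    have hsk : 0 < stirlingSeq k := stirlingSeq_pos' (by omega)
    rw [div_eq_iff hB]
    field_simp
    rw [show -e = (1 - (m:ℝ)) / 2 by rw [he]; ring]
  -- the limit of the Stirling ratio
  have hlim : Tendsto (fun k : ℕ =>
      stirlingSeq (m * k) / (stirlingSeq k) ^ m * Real.pi ^ e) atTop (nhds 1) := by
    have hmk : Tendsto (fun k : ℕ => m * k) atTop atTop := by
      apply tendsto_atTop_mono (fun k => ?_) tendsto_id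
      calc (k : ℕ) = 1 * k := (one_mul k).symm
        _ ≤ m * k := Nat.mul_le_mul_right k (by omega)
    have h1 : Tendsto (fun k : ℕ => stirlingSeq (m * k)) atTop (nhds (√π)) :=
      tendsto_stirlingSeq_sqrt_pi.comp hmk
    have h2 : Tendsto (fun k : ℕ => (stirlingSeq k) ^ m) atTop (nhds ((√π) ^ m)) :=
      tendsto_stirlingSeq_sqrt_pi.pow m
    have hne : (√π) ^ m ≠ 0 := by positivity
    have h3 : Tendsto (fun k : ℕ =>
        stirlingSeq (m * k) / (stirlingSeq k) ^ m * Real.pi ^ e) atTop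
        (nhds (√π / (√π) ^ m * Real.pi ^ e)) := (h1.div h2 hne).mul_const _
    convert h3 using 2
    rw [Real.sqrt_eq_rpow, ← Real.rpow_natCast (Real.pi ^ ((1:ℝ)/2)) m,
      ← Real.rpow_mul hπ.le, ← Real.rpow_sub hπ, ← Real.rpow_add hπ]
    rw [show (1:ℝ)/2 - 1/2 * (m:ℝ) + e = 0 by rw [he]; ring, Real.rpow_zero]
  -- first part
  have part1 : Tendsto (fun k : ℕ =>
      ((Nat.factorial (m * k) : ℝ) / (Nat.factorial k : ℝ) ^ m / (m : ℝ) ^ (m * k)) /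
        (C * (k : ℝ) ^ (-((m : ℝ) - 1) / 2))) atTop (nhds 1) := by
    apply hlim.congr'
    filter_upwards [eventually_ge_atTop 1] with k hk
    rw [show -((m : ℝ) - 1) / 2 = -e by rw [he]; ring]
    exact (hratio k hk).symm
  refine ⟨part1, ?_⟩
  -- summability part
  set f : ℕ → ℝ := fun k =>
    (Nat.factorial (m * k) : ℝ) / (Nat.factorial k : ℝ) ^ m / (m : ℝ) ^ (m * k) with hf
  set t : ℕ → ℝ := fun k => C * (k : ℝ) ^ (-e) with ht
  have htpos : ∀ k : ℕ, 1 ≤ k → 0 < t k := fun k hk => by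
    have : (0:ℝ) < k := by exact_mod_cast hk
    exact mul_pos hC (Real.rpow_pos_of_pos this _)
  have hequiv : (fun k : ℕ => f (k + 1)) ~[atTop] (fun k : ℕ => t (k + 1)) := by
    rw [isEquivalent_iff_tendsto_one]
    · have := part1.comp (tendsto_add_atTop_nat 1)
      apply this.congr
      intro k
      rw [Pi.div_apply, show -((m : ℝ) - 1) / 2 = -e by rw [he]; ring]
      rfl
    · filter_upwards with k
      exact (htpos (k+1) (by omega)).ne'
  have hsum_t : Summable (fun k : ℕ => t (k + 1)) ↔ 3 < m := by
    have h1 : Summable (fun k : ℕ => t (k + 1)) ↔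
        Summable (fun k : ℕ => (((k + 1 : ℕ)) : ℝ) ^ (-e)) := by
      simp only [ht]
      exact summable_mul_left_iff hC.ne'
    have h2 : Summable (fun k : ℕ => (((k + 1 : ℕ)) : ℝ) ^ (-e)) ↔
        Summable (fun n : ℕ => (n : ℝ) ^ (-e)) :=
      summable_nat_add_iff (f := fun n : ℕ => (n : ℝ) ^ (-e)) 1
    rw [h1, h2, Real.summable_nat_rpow, he]
    constructor
    · intro h
      have : (3:ℝ) < m := by linarith
      exact_mod_cast this
    · intro h
      have : (3:ℝ) < m := by exact_mod_cast h
      linarith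
  have hiff : Summable (fun k : ℕ => f (k + 1)) ↔ Summable (fun k : ℕ => t (k + 1)) :=
    ⟨fun h => summable_of_isBigO_nat h hequiv.isBigO_symm,
     fun h => summable_of_isBigO_nat h hequiv.isBigO⟩
  have hgoal : (fun k : ℕ =>
      (Nat.factorial (m * (k + 1)) : ℝ) / (Nat.factorial (k + 1) : ℝ) ^ m /
        (m : ℝ) ^ (m * (k + 1))) = fun k : ℕ => f (k + 1) := rfl
  rw [hgoal, hiff, hsum_t]
  omega
end

section
/- Let (P_n) be random variables with P_n ~ Pois(n). Then lim_{n→∞} P(P_n < n) = 1/2. -/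
open Filter Topology MeasureTheory Real Set

private lemma sum_eq_integral {n : ℕ} (hn : 1 ≤ n) :
    ∑ k ∈ Finset.range n, Real.exp (-(n : ℝ)) * (n : ℝ) ^ k / (Nat.factorial k)
      = ∫ t in Ioi (n : ℝ), t ^ (n - 1) * Real.exp (-t) / (Nat.factorial (n - 1)) := by
  set f : ℝ → ℝ := fun x => Real.exp (-x) * ∑ k ∈ Finset.range n, x ^ k / (Nat.factorial k)
    with hf
  have hderiv : ∀ x : ℝ,
      HasDerivAt f (-(x ^ (n-1) * Real.exp (-x) / (Nat.factorial (n-1)))) x := by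
    intro x
    have hS : HasDerivAt (fun y : ℝ => ∑ k ∈ Finset.range n, y ^ k / (Nat.factorial k))
        (∑ k ∈ Finset.range (n-1), x ^ k / (Nat.factorial k)) x := by
      have h1 : HasDerivAt (fun y : ℝ => ∑ k ∈ Finset.range n, y ^ k / (Nat.factorial k))
          (∑ k ∈ Finset.range n, (k : ℝ) * x ^ (k-1) / (Nat.factorial k)) x :=
        HasDerivAt.fun_sum fun k _ => (hasDerivAt_pow k x).div_const (Nat.factorial k : ℝ)
      convert h1 using 1
      obtain ⟨m, rfl⟩ : ∃ m, n = m + 1 := ⟨n - 1, (Nat.succ_pred_eq_of_pos hn).symm⟩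
      rw [Finset.sum_range_succ']
      simp only [Nat.add_sub_cancel]
      rw [Nat.cast_zero, zero_mul, zero_div, add_zero]
      refine Finset.sum_congr rfl fun i _ => ?_
      have h1 : ((i:ℝ) + 1) ≠ 0 := by positivity
      have h2 : ((i.factorial : ℝ)) ≠ 0 := by positivity
      rw [Nat.factorial_succ]
      push_cast
      field_simp
    have he : HasDerivAt (fun y : ℝ => Real.exp (-y)) (-Real.exp (-x)) x := by
      simpa using ((hasDerivAt_id x).neg).exp
    have := he.mul hS
    refine this.congr_deriv ?_
    have hsplit : ∑ k ∈ Finset.range n, x ^ k / (Nat.factorial k : ℝ)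
        = (∑ k ∈ Finset.range (n-1), x ^ k / (Nat.factorial k)) + x^(n-1) / (Nat.factorial (n-1)) := by
      conv_lhs => rw [show n = (n-1)+1 from (Nat.succ_pred_eq_of_pos hn).symm]
      rw [Finset.sum_range_succ]
    rw [hsplit]
    ring
  have hint : IntegrableOn (fun t : ℝ => t ^ (n-1) * Real.exp (-t)) (Ioi (n:ℝ)) := by
    have base : IntegrableOn (fun x : ℝ => Real.exp (-x) * x ^ ((n:ℝ) - 1)) (Ioi 0) :=
      Real.GammaIntegral_convergent (by exact_mod_cast hn)
    have base2 := base.mono_set (Ioi_subset_Ioi (by positivity : (0:ℝ) ≤ n))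
    refine base2.congr_fun ?_ measurableSet_Ioi
    intro x hx
    rw [show (n:ℝ) - 1 = ((n - 1 : ℕ) : ℝ) by rw [Nat.cast_sub hn, Nat.cast_one]]
    simp only [Real.rpow_natCast]
    ring
  have hint' : IntegrableOn
      (fun t : ℝ => -(t ^ (n-1) * Real.exp (-t) / (Nat.factorial (n-1)))) (Ioi (n:ℝ)) :=
    (hint.div_const _).neg
  have hf0 : Tendsto f atTop (𝓝 0) := by
    have h0 : Tendsto (fun x : ℝ => ∑ k ∈ Finset.range n, x ^ k * Real.exp (-x) / (Nat.factorial k))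
        atTop (𝓝 (∑ k ∈ Finset.range n, 0)) :=
      tendsto_finset_sum _ fun k _ => by
        simpa using (tendsto_pow_mul_exp_neg_atTop_nhds_zero k).div_const (Nat.factorial k : ℝ)
    rw [Finset.sum_const, smul_zero] at h0
    refine h0.congr fun x => ?_
    show _ = Real.exp (-x) * ∑ k ∈ Finset.range n, x ^ k / (Nat.factorial k)
    rw [Finset.mul_sum]
    exact Finset.sum_congr rfl fun k _ => by ring
  have key := integral_Ioi_of_hasDerivAt_of_tendsto' (a := (n:ℝ))
    (fun x _ => hderiv x) hint' hf0
  rw [integral_neg, zero_sub, neg_inj] at key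
  rw [key]
  show _ = Real.exp (-(n:ℝ)) * ∑ k ∈ Finset.range n, (n:ℝ) ^ k / (Nat.factorial k)
  rw [Finset.mul_sum]
  exact Finset.sum_congr rfl fun k _ => by ring

open MeasureTheory Real Set in
private lemma integral_comp_add_right_Ioi (f : ℝ → ℝ) (a c : ℝ) :
    ∫ x in Ioi a, f (x + c) = ∫ x in Ioi (a + c), f x := by
  have h₁ : MeasurePreserving (fun x : ℝ => x + c) volume volume :=
    measurePreserving_add_right volume c
  have h₂ : MeasurableEmbedding (fun x : ℝ => x + c) :=
    (MeasurableEquiv.addRight c).measurableEmbedding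
  have : (fun x : ℝ => x + c) ⁻¹' (Ioi (a + c)) = Ioi a := by
    ext x; simp
  rw [← this, h₁.setIntegral_preimage_emb h₂]

noncomputable def phi (n : ℕ) (u : ℝ) : ℝ :=
    (1 + u / Real.sqrt n) ^ (n - 1) * Real.exp (-(Real.sqrt n * u))

private lemma integral_eq_c_mul_J {n : ℕ} (hn : 1 ≤ n) :
    ∫ t in Ioi (n : ℝ), t ^ (n - 1) * Real.exp (-t) / (Nat.factorial (n - 1))
      = (Real.sqrt n * (n : ℝ) ^ (n - 1) * Real.exp (-(n : ℝ)) / (Nat.factorial (n - 1)))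
        * ∫ u in Ioi (0 : ℝ), phi n u := by
  have hn0 : (0:ℝ) < n := by exact_mod_cast hn
  have hs : (0:ℝ) < Real.sqrt n := Real.sqrt_pos.mpr hn0
  set g : ℝ → ℝ := fun t => t ^ (n - 1) * Real.exp (-t) with hg
  have h1 : ∫ u in Ioi (0:ℝ), g (Real.sqrt n * u + n)
      = (Real.sqrt n)⁻¹ • ∫ t in Ioi (n:ℝ), g t := by
    have h := integral_comp_mul_left_Ioi (fun x => g (x + n)) 0 hs
    rw [mul_zero] at h
    rw [h, integral_comp_add_right_Ioi, zero_add]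
  have h2 : ∀ u ∈ Ioi (0:ℝ), g (Real.sqrt n * u + n)
      = ((n:ℝ) ^ (n - 1) * Real.exp (-(n:ℝ))) * phi n u := by
    intro u hu
    have hss : Real.sqrt n * Real.sqrt n = (n:ℝ) := Real.mul_self_sqrt hn0.le
    have key : Real.sqrt n * u + n = (n:ℝ) * (1 + u / Real.sqrt n) := by
      field_simp
      linear_combination u * hss
    show (Real.sqrt n * u + n) ^ (n-1) * Real.exp (-(Real.sqrt n * u + n)) = _
    rw [key, mul_pow, phi]
    rw [show -((n:ℝ) * (1 + u / Real.sqrt n)) = -(n:ℝ) + -(Real.sqrt n * u) by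
      rw [← key]; ring]
    rw [Real.exp_add]
    ring
  have h3 : ∫ u in Ioi (0:ℝ), g (Real.sqrt n * u + n)
      = ((n:ℝ) ^ (n - 1) * Real.exp (-(n:ℝ))) * ∫ u in Ioi (0:ℝ), phi n u := by
    rw [setIntegral_congr_fun measurableSet_Ioi h2, MeasureTheory.integral_const_mul]
  have h4 : ∫ t in Ioi (n:ℝ), g t
      = Real.sqrt n * (((n:ℝ) ^ (n - 1) * Real.exp (-(n:ℝ))) * ∫ u in Ioi (0:ℝ), phi n u) := by
    rw [← h3, h1, smul_eq_mul, ← mul_assoc, mul_inv_cancel₀ hs.ne', one_mul]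
  calc ∫ t in Ioi (n : ℝ), g t / (Nat.factorial (n - 1))
      = (∫ t in Ioi (n:ℝ), g t) / (Nat.factorial (n - 1)) := integral_div _ _
    _ = _ := by rw [h4]; ring



private lemma phi_le_bound {n : ℕ} (hn : 1 ≤ n) {u : ℝ} (hu : 0 < u) :
    phi n u ≤ Real.exp (-(1/9) * u ^ 2) + Real.exp (-(1/9) * u) := by
  have hn0 : (0:ℝ) < n := by exact_mod_cast hn
  have hn1 : (1:ℝ) ≤ n := by exact_mod_cast hn
  set s := Real.sqrt n with hsdef
  have hss : s * s = (n:ℝ) := Real.mul_self_sqrt hn0.le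
  have hs1 : 1 ≤ s := by nlinarith [Real.sqrt_nonneg (n:ℝ)]
  have hs0 : 0 < s := lt_of_lt_of_le one_pos hs1
  set x := u / s with hxdef
  have hx0 : 0 < x := div_pos hu hs0
  have hxs : x * s = u := div_mul_cancel₀ u hs0.ne'
  set r := Real.sqrt (1 + x) with hrdef
  have hr2 : r * r = 1 + x := Real.mul_self_sqrt (by linarith)
  have hr1 : 1 ≤ r := by nlinarith [Real.sqrt_nonneg (1 + x)]
  clear_value s x r
  have hA : phi n u ≤ Real.exp (-((n:ℝ) * (r - 1)^2)) := by
    have h1x : (1:ℝ) ≤ 1 + x := by linarith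
    have e1 : (1 + x) ^ (n - 1) ≤ (1 + x) ^ n := pow_le_pow_right₀ h1x (Nat.sub_le n 1)
    have e2 : 1 + x ≤ Real.exp (2 * (r - 1)) := by
      have hre := Real.add_one_le_exp (r - 1)
      calc 1 + x = r * r := hr2.symm
        _ ≤ Real.exp (r - 1) * Real.exp (r - 1) :=
            mul_le_mul (by linarith) (by linarith) (by linarith) (Real.exp_nonneg _)
        _ = Real.exp (2 * (r - 1)) := by rw [← Real.exp_add]; ring_nf
    have e3 : (1 + x) ^ n ≤ Real.exp ((n:ℝ) * (2 * (r - 1))) := by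
      rw [Real.exp_nat_mul]
      exact pow_le_pow_left₀ (by linarith) e2 n
    have e4 : phi n u ≤ Real.exp ((n:ℝ) * (2 * (r-1))) * Real.exp (-(s * u)) := by
      unfold phi
      rw [← hsdef, ← hxdef]
      exact mul_le_mul_of_nonneg_right (le_trans e1 e3) (Real.exp_nonneg _)
    refine e4.trans (le_of_eq ?_)
    rw [← Real.exp_add]
    congr 1
    have hsu : s * u = (n:ℝ) * x := by rw [← hxs]; linear_combination x * hss
    rw [hsu]
    linear_combination (n:ℝ) * hr2
  have hB : (n:ℝ) * (r - 1)^2 = u^2 / (r + 1)^2 := by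
    have hrp : (0:ℝ) < (r + 1)^2 := by positivity
    rw [eq_div_iff hrp.ne']
    linear_combination ((n:ℝ)*(r*r - 1 + x)) * hr2 - (x^2) * hss + (x*s + u) * hxs
  rcases le_or_gt u s with hcase | hcase
  · -- quadratic regime
    have hx1 : x ≤ 1 := by rw [hxdef]; exact (div_le_one hs0).mpr hcase
    have hrle : r ≤ 2 := by nlinarith [hr2]
    have h9 : (r + 1)^2 ≤ 9 := by nlinarith
    have hkey : (1/9) * u^2 ≤ (n:ℝ) * (r - 1)^2 := by
      rw [hB, show (1/9) * u^2 = u^2 / 9 by ring]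
      gcongr
    have hmono := Real.exp_le_exp.mpr (neg_le_neg hkey)
    refine (hA.trans ?_)
    rw [show -((1:ℝ)/9) * u^2 = -((1/9) * u^2) by ring]
    exact hmono.trans (le_add_of_nonneg_right (Real.exp_pos _).le)
  · -- linear regime
    have hx1 : 1 < x := by rw [hxdef]; exact (one_lt_div hs0).mpr hcase
    obtain ⟨w, hww, hw1⟩ : ∃ w, w * w = x ∧ 1 ≤ w :=
      ⟨Real.sqrt x, Real.mul_self_sqrt hx0.le, by
        nlinarith [Real.sqrt_nonneg x, Real.mul_self_sqrt hx0.le]⟩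
    have hr2w : r ≤ 2 * w := by
      refine le_of_pow_le_pow_left₀ two_ne_zero (by linarith) ?_
      nlinarith [hr2, hww]
    have hrw : r + 1 ≤ 3 * w := by linarith
    have h9x : (r + 1)^2 ≤ 9 * x := by
      have h0 : (r + 1)^2 ≤ (3*w)^2 := pow_le_pow_left₀ (by linarith) hrw 2
      have h1 : (3*w)^2 = 9 * x := by rw [← hww]; ring
      linarith
    have heq : u^2 / (9 * x) = u * s / 9 := by
      rw [div_eq_div_iff (by positivity) (by norm_num)]
      linear_combination (-9*u) * hxs
    have hkey : (1/9) * u ≤ (n:ℝ) * (r - 1)^2 := by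
      rw [hB]
      have h1 : u^2 / (9 * x) ≤ u^2 / (r + 1)^2 :=
        div_le_div_of_nonneg_left (sq_nonneg u) (by positivity) h9x
      have h2 : (1/9) * u ≤ u * s / 9 := by
        have := le_mul_of_one_le_right hu.le hs1
        linarith
      rw [heq] at h1
      linarith
    have hmono := Real.exp_le_exp.mpr (neg_le_neg hkey)
    refine (hA.trans ?_)
    rw [show -((1:ℝ)/9) * u = -((1/9) * u) by ring]
    exact hmono.trans (le_add_of_nonneg_left (Real.exp_pos _).le)

private lemma sqrtn_atTop : Tendsto (fun n : ℕ => Real.sqrt n) atTop atTop := by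
  simp only [Real.sqrt_eq_rpow]
  exact (tendsto_rpow_atTop (by norm_num)).comp tendsto_natCast_atTop_atTop

private lemma phi_tendsto {u : ℝ} (hu : 0 < u) :
    Tendsto (fun n : ℕ => phi n u) atTop (𝓝 (Real.exp (-(1/2) * u ^ 2))) := by
  set E : ℕ → ℝ := fun n => ((n - 1 : ℕ) : ℝ) * Real.log (1 + u / Real.sqrt n)
      - Real.sqrt n * u with hEdef
  have hD : Tendsto (fun n : ℕ => E n + (1/2) * u^2) atTop (𝓝 0) := by
    apply squeeze_zero_norm' (a := fun n : ℕ => (2*u^3 + u)/Real.sqrt n)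
    · filter_upwards [eventually_ge_atTop 1, sqrtn_atTop.eventually_ge_atTop (2*u)]
        with n hn hsu
      have hn0 : (0:ℝ) < n := by exact_mod_cast hn
      have hn1 : (1:ℝ) ≤ n := by exact_mod_cast hn
      simp only [hEdef]
      rw [Nat.cast_sub hn, Nat.cast_one]
      set s := Real.sqrt n with hsdef
      have hss : s * s = (n:ℝ) := Real.mul_self_sqrt hn0.le
      have hs1 : 1 ≤ s := by nlinarith [Real.sqrt_nonneg (n:ℝ)]
      have hs0 : 0 < s := lt_of_lt_of_le one_pos hs1
      set x := u / s with hxdef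
      have hx0 : 0 < x := div_pos hu hs0
      have hxs : x * s = u := div_mul_cancel₀ u hs0.ne'
      have hxhalf : x ≤ 1/2 := by
        rw [hxdef, div_le_iff₀ hs0]; linarith
      set L := Real.log (1 + x) with hLdef
      set err := L - x + x^2/2 with herrdef
      clear_value s x
      have hlog := Real.abs_log_sub_add_sum_range_le
        (x := -x) (by rw [abs_neg, abs_of_pos hx0]; linarith) 2
      have hsum : (∑ i ∈ Finset.range 2, (-x) ^ (i + 1) / ((i:ℝ) + 1)) = -x + x^2/2 := by
        rw [Finset.sum_range_succ, Finset.sum_range_one]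
        norm_num
      rw [hsum, sub_neg_eq_add, abs_neg, abs_of_pos hx0] at hlog
      have herr : |err| ≤ 2 * x^3 := by
        have heq : -x + x ^ 2 / 2 + L = err := by rw [herrdef]; ring
        rw [heq] at hlog
        have hhalf : (1:ℝ)/2 ≤ 1 - x := by linarith
        have h1 : x^(2+1) / (1 - x) ≤ x^(2+1) / (1/2) :=
          div_le_div_of_nonneg_left (by positivity) (by norm_num) hhalf
        have h2 : x^(2+1) / ((1:ℝ)/2) = 2 * x^3 := by ring
        linarith
      have hnx : (n:ℝ) * x = s * u := by
        linear_combination (-x) * hss + s * hxs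
      have hnx2 : (n:ℝ) * x^2 = u^2 := by
        linear_combination (-x^2) * hss + (x*s + u) * hxs
      have h3 : (n:ℝ) * x^3 = u^3 / s := by
        rw [eq_div_iff hs0.ne']
        linear_combination (-(x^3*s)) * hss + (x^2*s^2 + x*s*u + u^2) * hxs
      have hid : ((n:ℝ)-1) * L - s*u + 1/2*u^2 = ((n:ℝ)-1)*err + (x^2/2 - x) := by
        rw [herrdef]
        linear_combination hnx - (1/2) * hnx2
      have ha : |((n:ℝ)-1)*err| ≤ ((n:ℝ)-1) * (2*x^3) := by
        rw [abs_mul, abs_of_nonneg (by linarith : (0:ℝ) ≤ (n:ℝ)-1)]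
        exact mul_le_mul_of_nonneg_left herr (by linarith)
      have hb : |x^2/2 - x| ≤ x := by
        rw [abs_of_nonpos (by nlinarith)]
        nlinarith
      calc ‖((n:ℝ)-1) * L - s*u + 1/2*u^2‖
          = |((n:ℝ)-1)*err + (x^2/2 - x)| := by rw [Real.norm_eq_abs, hid]
        _ ≤ |((n:ℝ)-1)*err| + |x^2/2 - x| := abs_add_le _ _
        _ ≤ ((n:ℝ)-1) * (2*x^3) + x := add_le_add ha hb
        _ ≤ (2*u^3 + u)/s := by
            have hsplit : (2*u^3 + u)/s = 2*((n:ℝ)*x^3) + x := by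
              rw [h3, hxdef]; ring
            rw [hsplit]
            have : (0:ℝ) < x^3 := by positivity
            nlinarith
    · exact tendsto_const_nhds.div_atTop sqrtn_atTop
  have hE : Tendsto E atTop (𝓝 (-(1/2) * u^2)) := by
    have h := hD.sub_const ((1/2) * u^2)
    simp only [add_sub_cancel_right, zero_sub, neg_mul] at h ⊢
    exact h
  have hcomp := (Real.continuous_exp.tendsto _).comp hE
  refine hcomp.congr' ?_
  filter_upwards [eventually_ge_atTop 1] with n hn
  have hn0 : (0:ℝ) < n := by exact_mod_cast hn
  have hs0 : 0 < Real.sqrt n := Real.sqrt_pos.mpr hn0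
  have h1x : 0 < 1 + u / Real.sqrt n := by positivity
  show Real.exp (E n) = phi n u
  simp only [hEdef]
  unfold phi
  rw [sub_eq_add_neg, Real.exp_add, Real.exp_nat_mul, Real.exp_log h1x]

private lemma J_tendsto :
    Tendsto (fun n : ℕ => ∫ u in Ioi (0 : ℝ), phi n u) atTop
      (𝓝 (Real.sqrt (π / (1/2)) / 2)) := by
  have hbound_int : Integrable
      (fun u : ℝ => Real.exp (-(1/9) * u^2) + Real.exp (-(1/9) * u))
      (volume.restrict (Ioi 0)) := by
    apply Integrable.add
    · exact (integrable_exp_neg_mul_sq (by norm_num : (0:ℝ) < 1/9)).restrict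
    · exact exp_neg_integrableOn_Ioi 0 (by norm_num : (0:ℝ) < 1/9)
  have hmeas : ∀ n : ℕ, AEStronglyMeasurable (phi (n+1)) (volume.restrict (Ioi 0)) := by
    intro n
    have : Continuous (phi (n+1)) := by unfold phi; fun_prop
    exact this.aestronglyMeasurable
  have h_bound : ∀ n : ℕ, ∀ᵐ u ∂(volume.restrict (Ioi (0:ℝ))),
      ‖phi (n+1) u‖ ≤ Real.exp (-(1/9) * u^2) + Real.exp (-(1/9) * u) := by
    intro n
    rw [ae_restrict_iff' measurableSet_Ioi]
    refine Eventually.of_forall fun u hu => ?_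
    have hu' : (0:ℝ) < u := hu
    have hpos : 0 < phi (n+1) u := by
      unfold phi
      have h1 : 0 < 1 + u / Real.sqrt (n+1) := by
        have : 0 < Real.sqrt ((n:ℝ)+1) := Real.sqrt_pos.mpr (by positivity)
        positivity
      positivity
    rw [Real.norm_eq_abs, abs_of_pos hpos]
    exact phi_le_bound (Nat.succ_le_succ (Nat.zero_le n)) hu'
  have h_lim : ∀ᵐ u ∂(volume.restrict (Ioi (0:ℝ))),
      Tendsto (fun n : ℕ => phi (n+1) u) atTop (𝓝 (Real.exp (-(1/2) * u^2))) := by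
    rw [ae_restrict_iff' measurableSet_Ioi]
    refine Eventually.of_forall fun u hu => ?_
    exact (phi_tendsto hu).comp (tendsto_add_atTop_nat 1)
  have key := MeasureTheory.tendsto_integral_of_dominated_convergence
    (F := fun (n : ℕ) u => phi (n+1) u) (f := fun u => Real.exp (-(1/2) * u^2))
    _ hmeas hbound_int h_bound h_lim
  rw [show (∫ u in Ioi (0:ℝ), Real.exp (-(1/2) * u^2)) = Real.sqrt (π / (1/2)) / 2 from
    integral_gaussian_Ioi (1/2)] at key
  exact (tendsto_add_atTop_iff_nat 1).mp key

private lemma c_tendsto :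
    Tendsto (fun n : ℕ =>
        Real.sqrt n * (n : ℝ) ^ (n - 1) * Real.exp (-(n : ℝ)) / (Nat.factorial (n - 1)))
      atTop (𝓝 ((Real.sqrt 2 * Real.sqrt π)⁻¹)) := by
  have hπ : (0:ℝ) < Real.sqrt π := Real.sqrt_pos.mpr Real.pi_pos
  have hlim : Tendsto (fun n : ℕ => (Real.sqrt 2 * Stirling.stirlingSeq n)⁻¹) atTop
      (𝓝 ((Real.sqrt 2 * Real.sqrt π)⁻¹)) := by
    refine Tendsto.inv₀ (tendsto_const_nhds.mul Stirling.tendsto_stirlingSeq_sqrt_pi) ?_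
    positivity
  refine hlim.congr' ?_
  filter_upwards [eventually_ge_atTop 1] with n hn
  have hn0 : (0:ℝ) < n := by exact_mod_cast hn
  have hsn : 0 < Real.sqrt n := Real.sqrt_pos.mpr hn0
  have hfac : (0:ℝ) < (Nat.factorial (n-1) : ℝ) := by
    exact_mod_cast Nat.factorial_pos (n-1)
  have hnfac : ((Nat.factorial n : ℝ)) = (n:ℝ) * (Nat.factorial (n-1) : ℝ) := by
    exact_mod_cast (Nat.mul_factorial_pred (by omega : n ≠ 0)).symm
  have hpow : (n:ℝ)^(n-1) * n = (n:ℝ)^n := by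
    rw [← pow_succ]
    congr 1
    omega
  have hexp : ((n:ℝ) / Real.exp 1)^n = (n:ℝ)^n * Real.exp (-(n:ℝ)) := by
    rw [div_pow, Real.exp_one_pow, Real.exp_neg, div_eq_mul_inv]
  unfold Stirling.stirlingSeq
  rw [Real.sqrt_mul (by norm_num : (0:ℝ) ≤ 2), hexp, hnfac]
  have hexpn : 0 < Real.exp (-(n:ℝ)) := Real.exp_pos _
  have hs2 : (0:ℝ) < Real.sqrt 2 := by positivity
  rw [eq_div_iff hfac.ne']
  field_simp
  rw [← hpow]
  ring


/-- For `P_n ~ Pois(n)`, `P(P_n < n) → 1/2` as `n → ∞`. -/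
theorem poisson_below_mean_tendsto_half :
    Tendsto (fun n : ℕ =>
        ∑ k ∈ Finset.range n, Real.exp (-(n : ℝ)) * (n : ℝ) ^ k / (Nat.factorial k))
      atTop (nhds (1 / 2)) := by
  have h := c_tendsto.mul J_tendsto
  have hπ : (0:ℝ) < π := Real.pi_pos
  have hval : (Real.sqrt 2 * Real.sqrt π)⁻¹ * (Real.sqrt (π / (1/2)) / 2) = 1 / 2 := by
    rw [show π / (1/2) = 2 * π by ring, Real.sqrt_mul (by norm_num)]
    have h2 : Real.sqrt 2 ≠ 0 := by positivity
    have hp : Real.sqrt π ≠ 0 := by positivity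
    field_simp
  rw [hval] at h
  refine h.congr' ?_
  filter_upwards [eventually_ge_atTop 1] with n hn
  rw [sum_eq_integral hn, integral_eq_c_mul_J hn]
end

section
/- For m ≥ 3 and positive reals α₁,…,α_m with Z a standard normal random variable, the function α_ℓ ↦ E[∏_{k=2}^m Φ(√(α_k/α₁)·Z)] is strictly increasing in each α_ℓ for 2 ≤ ℓ ≤ m; for m = 2 it is constantly 1/2. -/
open MeasureTheory

/-- The standard normal density `φ`. -/
noncomputable def stdNormalPDF (z : ℝ) : ℝ :=
  Real.exp (-z ^ 2 / 2) / Real.sqrt (2 * Real.pi)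

/-- The standard normal CDF `Φ`. -/
noncomputable def stdNormalCDF (b : ℝ) : ℝ :=
  ∫ z in Set.Iic b, stdNormalPDF z

/-!
Single out the factor `Φ(s Z)`, `s = √(α_ℓ/α₁)`, that carries `α_ℓ`: the expectation is
`∫ Φ(s z) Q(z) dz` with `Q(z) = φ(z) ∏_{k ≠ ℓ} Φ(c_k z)`, and `s` increases with `α_ℓ`.
Folding the integral onto `z > 0` and using `Φ(-x) = 1 - Φ(x)`, the difference of the
expectations at `s < s'` becomes `∫_{z>0} (Φ(s'z) - Φ(sz)) (Q(z) - Q(-z)) dz`. Both factors are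
positive because `Φ` is strictly increasing and, with at least one other factor, `Q(-z) < Q(z)`.
When `Q = φ` is even the same folding gives `∫ Φ(s z) φ(z) dz = 1/2`.
-/

open Set Finset

lemma stdNormalPDF_pos (z : ℝ) : 0 < stdNormalPDF z := by
  unfold stdNormalPDF; positivity

lemma stdNormalPDF_neg (z : ℝ) : stdNormalPDF (-z) = stdNormalPDF z := by
  simp [stdNormalPDF]

lemma integrable_stdNormalPDF : Integrable stdNormalPDF := by
  refine ((integrable_exp_neg_mul_sq (b := 1 / 2) (by norm_num)).div_const
    (Real.sqrt (2 * Real.pi))).congr (ae_of_all _ fun z => ?_)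
  simp only [stdNormalPDF]
  ring_nf

lemma integral_stdNormalPDF : ∫ z, stdNormalPDF z = 1 := by
  have h : ∫ z, stdNormalPDF z =
      (∫ z, Real.exp (-(1 / 2) * z ^ 2)) / Real.sqrt (2 * Real.pi) := by
    rw [← integral_div]
    congr with z
    simp only [stdNormalPDF]
    ring_nf
  rw [h, integral_gaussian, show Real.pi / (1 / 2) = 2 * Real.pi by ring]
  exact div_self (Real.sqrt_pos.2 (by positivity)).ne'

lemma stdNormalCDF_nonneg (b : ℝ) : 0 ≤ stdNormalCDF b :=
  setIntegral_nonneg measurableSet_Iic fun z _ => (stdNormalPDF_pos z).le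

lemma stdNormalCDF_strictMono : StrictMono stdNormalCDF := by
  intro a b hab
  have hdiff := intervalIntegral.integral_Iic_sub_Iic
    integrable_stdNormalPDF.integrableOn integrable_stdNormalPDF.integrableOn (a := a) (b := b)
  have hpos : 0 < ∫ z in a..b, stdNormalPDF z :=
    intervalIntegral.intervalIntegral_pos_of_pos integrable_stdNormalPDF.intervalIntegrable
      stdNormalPDF_pos hab
  rw [← hdiff] at hpos
  exact sub_pos.1 hpos

lemma measurable_stdNormalCDF : Measurable stdNormalCDF :=
  stdNormalCDF_strictMono.monotone.measurable

lemma stdNormalCDF_pos (b : ℝ) : 0 < stdNormalCDF b :=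
  (stdNormalCDF_nonneg (b - 1)).trans_lt (stdNormalCDF_strictMono (by linarith))

lemma stdNormalCDF_neg (b : ℝ) : stdNormalCDF (-b) = 1 - stdNormalCDF b := by
  have hreflect : stdNormalCDF (-b) = ∫ z in Ioi b, stdNormalPDF z := by
    simp only [stdNormalCDF, ← integral_comp_neg_Ioi, stdNormalPDF_neg]
  have hsplit := intervalIntegral.integral_Iic_add_Ioi (b := b)
    integrable_stdNormalPDF.integrableOn integrable_stdNormalPDF.integrableOn
  rw [integral_stdNormalPDF] at hsplit
  rw [hreflect, stdNormalCDF]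
  linarith

lemma stdNormalCDF_le_one (b : ℝ) : stdNormalCDF b ≤ 1 := by
  linarith [stdNormalCDF_nonneg (-b), stdNormalCDF_neg b]

lemma integrable_prod_stdNormalCDF_mul {ι : Type*} (s : Finset ι) (c : ι → ℝ)
    {Q : ℝ → ℝ} (hQ : Integrable Q) :
    Integrable fun z => (∏ i ∈ s, stdNormalCDF (c i * z)) * Q z := by
  refine hQ.bdd_mul (c := 1) ?_ (ae_of_all _ fun z => ?_)
  · exact (Finset.measurable_prod _ fun i _ =>
      measurable_stdNormalCDF.comp (measurable_const_mul (c i))).aestronglyMeasurable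
  · rw [Real.norm_of_nonneg (prod_nonneg fun i _ => stdNormalCDF_nonneg _)]
    exact prod_le_one (fun i _ => stdNormalCDF_nonneg _) fun i _ => stdNormalCDF_le_one _

lemma integrable_stdNormalCDF_mul {Q : ℝ → ℝ} (hQ : Integrable Q) (s : ℝ) :
    Integrable fun z => stdNormalCDF (s * z) * Q z := by
  simpa using integrable_prod_stdNormalCDF_mul {()} (fun _ => s) hQ

lemma prod_stdNormalCDF_mul_neg_lt {ι : Type*} {s : Finset ι} (hs : s.Nonempty) {c : ι → ℝ}
    (hc : ∀ i ∈ s, 0 < c i) {z : ℝ} (hz : 0 < z) :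
    ∏ i ∈ s, stdNormalCDF (c i * -z) < ∏ i ∈ s, stdNormalCDF (c i * z) :=
  prod_lt_prod_of_nonempty (fun i _ => stdNormalCDF_pos _)
    (fun i hi => stdNormalCDF_strictMono (by nlinarith [hc i hi])) hs

lemma integral_eq_setIntegral_Ioi_add_comp_neg {f : ℝ → ℝ} (hf : Integrable f) :
    ∫ z, f z = ∫ z in Ioi 0, (f z + f (-z)) := by
  rw [integral_add hf.integrableOn hf.comp_neg.integrableOn, integral_comp_neg_Ioi, neg_zero,
    add_comm, intervalIntegral.integral_Iic_add_Ioi hf.integrableOn hf.integrableOn]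

lemma integral_pos_of_add_comp_neg_pos {f : ℝ → ℝ} (hf : Integrable f)
    (hpos : ∀ z, 0 < z → 0 < f z + f (-z)) : 0 < ∫ z, f z := by
  rw [integral_eq_setIntegral_Ioi_add_comp_neg hf,
    setIntegral_pos_iff_support_of_nonneg_ae
      ((ae_restrict_iff' measurableSet_Ioi).2 (ae_of_all _ fun z hz => (hpos z hz).le))
      (hf.add hf.comp_neg).integrableOn]
  calc (0 : ENNReal) < volume (Ioi (0 : ℝ)) := by simp
    _ ≤ volume (Function.support (fun z => f z + f (-z)) ∩ Ioi 0) :=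
      measure_mono fun z hz => ⟨(hpos z hz).ne', hz⟩

theorem strictMono_integral_stdNormalCDF_mul {Q : ℝ → ℝ} (hQ : Integrable Q)
    (hQ_lt : ∀ z, 0 < z → Q (-z) < Q z) :
    StrictMono fun s => ∫ z, stdNormalCDF (s * z) * Q z := by
  intro a b hab
  rw [← sub_pos, ← integral_sub (integrable_stdNormalCDF_mul hQ b)
    (integrable_stdNormalCDF_mul hQ a)]
  refine integral_pos_of_add_comp_neg_pos
    ((integrable_stdNormalCDF_mul hQ b).sub (integrable_stdNormalCDF_mul hQ a)) fun z hz => ?_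
  have hΦ : stdNormalCDF (a * z) < stdNormalCDF (b * z) :=
    stdNormalCDF_strictMono (mul_lt_mul_of_pos_right hab hz)
  calc 0 < (stdNormalCDF (b * z) - stdNormalCDF (a * z)) * (Q z - Q (-z)) :=
        mul_pos (sub_pos.2 hΦ) (sub_pos.2 (hQ_lt z hz))
    _ = _ := by simp only [mul_neg, stdNormalCDF_neg]; ring

theorem integral_stdNormalCDF_mul_of_even {Q : ℝ → ℝ} (hQ : Integrable Q)
    (hQ_even : ∀ z, Q (-z) = Q z) (s : ℝ) :
    ∫ z, stdNormalCDF (s * z) * Q z = (∫ z, Q z) / 2 := by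
  have hf := integrable_stdNormalCDF_mul hQ s
  have hfold : ∀ z, stdNormalCDF (s * -z) * Q (-z) + stdNormalCDF (s * z) * Q z = Q z := by
    intro z
    rw [mul_neg, stdNormalCDF_neg, hQ_even]
    ring
  have htwice : 2 * ∫ z, stdNormalCDF (s * z) * Q z = ∫ z, Q z := by
    conv_lhs => rw [two_mul]; arg 1; rw [← integral_neg_eq_self]
    rw [← integral_add hf.comp_neg hf]
    simp only [hfold]
  linarith

lemma prod_stdNormalCDF_update_succ {m : ℕ} (α : Fin (m + 1) → ℝ) (j : Fin m) (a z : ℝ) :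
    ∏ i : Fin m, stdNormalCDF
        (Real.sqrt (Function.update α j.succ a i.succ / Function.update α j.succ a 0) * z) =
      stdNormalCDF (Real.sqrt (a / α 0) * z) *
        ∏ i ∈ univ.erase j, stdNormalCDF (Real.sqrt (α i.succ / α 0) * z) := by
  rw [← mul_prod_erase univ _ (mem_univ j)]
  congr 1
  · simp [Function.update_of_ne (Fin.succ_ne_zero j).symm]
  · refine prod_congr rfl fun i hi => ?_
    simp [Function.update_of_ne (Fin.succ_ne_zero j).symm, ne_of_mem_erase hi]

/-- With `m+1` players (so for `m ≥ 2`, i.e. at least 3 players), the limiting probability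
of player `0` being last, `E[∏_{k≠0} Φ(√(α_k/α₀) Z)]`, is strictly increasing in each
`α_ℓ`, `ℓ ≠ 0`; for two players (`m = 1`) it is constantly `1/2`. -/
theorem expected_phi_product_strictMono :
    (∀ m : ℕ, 2 ≤ m → ∀ α : Fin (m + 1) → ℝ, (∀ k, 0 < α k) →
      ∀ ℓ : Fin (m + 1), ℓ ≠ 0 →
        StrictMonoOn (fun a : ℝ =>
            ∫ z : ℝ,
              (∏ i : Fin m,
                stdNormalCDF
                  (Real.sqrt (Function.update α ℓ a i.succ / Function.update α ℓ a 0) * z)) *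
                stdNormalPDF z)
          (Set.Ioi (0 : ℝ))) ∧
    (∀ α₁ α₂ : ℝ, 0 < α₁ → 0 < α₂ →
      ∫ z : ℝ, stdNormalCDF (Real.sqrt (α₂ / α₁) * z) * stdNormalPDF z = 1 / 2) := by
  refine ⟨fun m hm α hα ℓ hℓ => ?_, fun α₁ α₂ _ _ => ?_⟩
  · obtain ⟨j, rfl⟩ := Fin.eq_succ_of_ne_zero hℓ
    have hothers : (univ.erase j).Nonempty := by
      rw [← card_pos, card_erase_of_mem (mem_univ j), card_univ, Fintype.card_fin]
      omega
    have hmono := strictMono_integral_stdNormalCDF_mul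
      (integrable_prod_stdNormalCDF_mul (univ.erase j) (fun i => Real.sqrt (α i.succ / α 0))
        integrable_stdNormalPDF)
      fun z hz => by
        rw [stdNormalPDF_neg]
        exact mul_lt_mul_of_pos_right (prod_stdNormalCDF_mul_neg_lt hothers
          (fun i _ => Real.sqrt_pos.2 (div_pos (hα _) (hα 0))) hz) (stdNormalPDF_pos z)
    intro a ha b _ hab
    simp only [prod_stdNormalCDF_update_succ, mul_assoc]
    exact hmono (Real.sqrt_lt_sqrt (div_nonneg (le_of_lt ha) (hα 0).le)
      (div_lt_div_of_pos_right hab (hα 0)))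
  · rw [integral_stdNormalCDF_mul_of_even integrable_stdNormalPDF stdNormalPDF_neg,
      integral_stdNormalPDF]
end
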